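/- arXiv:0801.4655 — 5 statements merged into one kernel-verified Lean document; each statement's English description precedes it below -/
import Mathlib

section
/- Let $U^{(1)}$ and $U^{(2)}$ be two adapted càdlàg processes satisfying $U^{(i)}_t = X_t - \delta \int_0^t \mathbf{1}_{\{U^{(i)}_s > b\}}\,ds$ for the same driving process $X$ and constants $\delta > 0$, $b \in \mathbb{R}$. Then $U^{(1)}_t = U^{(2)}_t$ for all $t \geq 0$. (Pathwise uniqueness for the refraction SDE.) -/
/-! The difference of two solutions is `-δ F` with `F t = ∫₀ᵗ g`, `g = φ ∘ U - φ ∘ V`. Since `φ` is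
monotone, `g` has the sign of `U - V`, so `g F ≤ 0`. As `F` is absolutely continuous with `F' = g`
a.e. and `F 0 = 0`, we get `F t ^ 2 = 2 ∫₀ᵗ g F ≤ 0`, hence `F t = 0`. -/

open MeasureTheory Set

theorem IntervalIntegrable.sq_integral_eq_two_mul_integral_mul_primitive {g : ℝ → ℝ} {a b : ℝ}
    (hg : IntervalIntegrable g volume a b) :
    (∫ x in a..b, g x) ^ 2 = 2 * ∫ x in a..b, g x * ∫ y in a..x, g y := by
  set F : ℝ → ℝ := fun x => ∫ y in a..x, g y
  have hF : AbsolutelyContinuousOnInterval F a b :=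
    hg.absolutelyContinuousOnInterval_intervalIntegral left_mem_uIcc
  have hderiv : ∀ᵐ x, x ∈ uIoc a b → deriv F x * F x + F x * deriv F x = 2 * (g x * F x) := by
    filter_upwards [hg.ae_hasDerivAt_integral] with x hx hxab
    rw [(hx (uIoc_subset_uIcc hxab) a left_mem_uIcc).deriv]
    ring
  have hFTC := hF.integral_deriv_mul_eq_sub hF
  rw [intervalIntegral.integral_congr_ae hderiv, intervalIntegral.integral_const_mul] at hFTC
  simp only [F, intervalIntegral.integral_same, mul_zero, sub_zero] at hFTC
  rw [sq, hFTC]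

theorem IntervalIntegrable.integral_eq_zero_of_mul_primitive_nonpos {g : ℝ → ℝ} {a b : ℝ}
    (hab : a ≤ b) (hg : IntervalIntegrable g volume a b)
    (hsign : ∀ x ∈ Ioc a b, g x * ∫ y in a..x, g y ≤ 0) :
    ∫ x in a..b, g x = 0 := by
  have hnonpos : ∫ x in a..b, g x * ∫ y in a..x, g y ≤ 0 := by
    rw [intervalIntegral.integral_of_le hab]
    exact setIntegral_nonpos measurableSet_Ioc hsign
  have hsq := hg.sq_integral_eq_two_mul_integral_mul_primitive
  exact pow_eq_zero_iff two_ne_zero |>.1 (le_antisymm (by linarith) (sq_nonneg _))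

theorem Monotone.eq_of_eq_sub_mul_integral_comp {φ X U V : ℝ → ℝ} {δ : ℝ} (hφ : Monotone φ)
    (hδ : 0 < δ) (hφU : ∀ t, IntervalIntegrable (fun s => φ (U s)) volume 0 t)
    (hφV : ∀ t, IntervalIntegrable (fun s => φ (V s)) volume 0 t)
    (hU : ∀ t ≥ (0:ℝ), U t = X t - δ * ∫ s in (0:ℝ)..t, φ (U s))
    (hV : ∀ t ≥ (0:ℝ), V t = X t - δ * ∫ s in (0:ℝ)..t, φ (V s)) :
    ∀ t ≥ (0:ℝ), U t = V t := by
  set g : ℝ → ℝ := fun s => φ (U s) - φ (V s)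
  have hg : ∀ t, IntervalIntegrable g volume 0 t := fun t => (hφU t).sub (hφV t)
  have hdiff : ∀ t ≥ (0:ℝ), U t - V t = -δ * ∫ s in (0:ℝ)..t, g s := fun t ht => by
    rw [intervalIntegral.integral_sub (hφU t) (hφV t), hU t ht, hV t ht]
    ring
  have hsign : ∀ t ≥ (0:ℝ), g t * ∫ s in (0:ℝ)..t, g s ≤ 0 := fun t ht => by
    have := (hφ.monovary monotone_id).sub_mul_sub_nonneg (V t) (U t)
    rw [id, id, hdiff t ht] at this
    nlinarith
  intro t ht
  have hzero := (hg t).integral_eq_zero_of_mul_primitive_nonpos ht fun s hs => hsign s hs.1.le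
  have := hdiff t ht
  rw [hzero, mul_zero] at this
  linarith

theorem monotone_indicator_Ioi_one (b : ℝ) :
    Monotone ((Ioi b).indicator fun _ => (1:ℝ)) := fun x y hxy => by
  by_cases hx : x ∈ Ioi b
  · rw [indicator_of_mem hx, indicator_of_mem (mem_Ioi.2 (lt_of_lt_of_le hx hxy))]
  · rw [indicator_of_notMem hx]
    exact indicator_nonneg (fun _ _ => zero_le_one) y

theorem Measurable.intervalIntegrable_indicator_Ioi_one_comp {U : ℝ → ℝ} (hU : Measurable U)
    (b c d : ℝ) :
    IntervalIntegrable (fun s => (Ioi b).indicator (fun _ => (1:ℝ)) (U s)) volume c d := by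
  refine (intervalIntegrable_const (c := (1:ℝ))).mono_fun
    ((measurable_const.indicator measurableSet_Ioi).comp hU).aestronglyMeasurable
    (ae_of_all _ fun s => ?_)
  simp only [norm_one, norm_indicator_eq_indicator_norm]
  exact indicator_le_self' (fun _ _ => zero_le_one) _

theorem pathwise_uniqueness_refraction_general
    (X U1 U2 : ℝ → ℝ) (δ b : ℝ) (hδ : 0 < δ)
    (hU1 : Measurable U1) (hU2 : Measurable U2)
    (h1 : ∀ t ≥ (0:ℝ), U1 t = X t - δ * ∫ s in (0:ℝ)..t,
      (Set.Ioi b).indicator (fun _ => (1:ℝ)) (U1 s))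
    (h2 : ∀ t ≥ (0:ℝ), U2 t = X t - δ * ∫ s in (0:ℝ)..t,
      (Set.Ioi b).indicator (fun _ => (1:ℝ)) (U2 s)) :
    ∀ t ≥ (0:ℝ), U1 t = U2 t :=
  (monotone_indicator_Ioi_one b).eq_of_eq_sub_mul_integral_comp hδ
    (hU1.intervalIntegrable_indicator_Ioi_one_comp b 0)
    (hU2.intervalIntegrable_indicator_Ioi_one_comp b 0) h1 h2

/-- Pathwise uniqueness for the refraction SDE: two solutions of
`U t = X t - δ ∫_0^t 1_{U s > b} ds` driven by the same path `X` coincide. -/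
theorem pathwise_uniqueness_refraction
    (X U1 U2 : ℝ → ℝ) (δ b : ℝ) (hδ : 0 < δ)
    (hX : Measurable X) (hU1 : Measurable U1) (hU2 : Measurable U2)
    (h1 : ∀ t ≥ (0:ℝ), U1 t = X t - δ * ∫ s in (0:ℝ)..t,
      (Set.Ioi b).indicator (fun _ => (1:ℝ)) (U1 s))
    (h2 : ∀ t ≥ (0:ℝ), U2 t = X t - δ * ∫ s in (0:ℝ)..t,
      (Set.Ioi b).indicator (fun _ => (1:ℝ)) (U2 s)) :
    ∀ t ≥ (0:ℝ), U1 t = U2 t :=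
  pathwise_uniqueness_refraction_general X U1 U2 δ b hδ hU1 hU2 h1 h2
end

section
/- Suppose $X^{(n)}, X^{(m)} : [0,t] \to \mathbb{R}$ are càdlàg paths with $\sup_{s \in [0,t]} |X^{(n)}_s - X^{(m)}_s| < \eta$, and $U^{(n)}, U^{(m)}$ are solutions of the respective refraction equations $U_s = X_s - \delta\int_0^s \mathbf{1}_{\{U_v > b\}}\,dv$ driven by $X^{(n)}$ and $X^{(m)}$ with the same $\delta > 0$ and level $b$. Then $\sup_{s \in [0,t]} |U^{(n)}_s - U^{(m)}_s| < 2\eta$; in particular the drift term $A^{(n,m)}_s := (U^{(n)}_s - U^{(m)}_s) - (X^{(n)}_s - X^{(m)}_s)$ satisfies $\sup_{s\in[0,t]}|A^{(n,m)}_s| \leq \eta$. -/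
/-!
Write `D = (Uⁿ - Uᵐ) - (Xⁿ - Xᵐ) = δ (Tᵐ - Tⁿ)`, where `T` is the time a solution has spent
above `b`; `D` is continuous and `D 0 = 0`. While `D ≥ η`, the closeness of the drivers forces
`Uⁿ > Uᵐ`, so `Uⁿ` is above `b` whenever `Uᵐ` is and `Tⁿ` grows at least as fast as `Tᵐ`: `D` cannot
increase. Hence `D` never exceeds `η`; by symmetry `|D| ≤ η`, and `|Uⁿ - Uᵐ| < 2η` follows.
-/

open MeasureTheory Set

theorem measurable_of_continuousWithinAt_Ici {β : Type*} [TopologicalSpace β]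
    [TopologicalSpace.PseudoMetrizableSpace β] [MeasurableSpace β] [BorelSpace β] {f : ℝ → β}
    (hf : ∀ x, ContinuousWithinAt f (Ici x) x) : Measurable f := by
  -- `f` is the pointwise limit of `f` composed with rounding up to the grid `ℤ / (n + 1)`.
  set r : ℕ → ℝ → ℝ := fun n x => ⌈x * (n + 1)⌉ / (n + 1)
  have hr_meas : ∀ n, Measurable fun x => f (r n x) := fun n =>
    (measurable_from_top (f := fun k : ℤ => f (k / (n + 1)))).comp
      (Int.measurable_ceil.comp (measurable_id.mul_const _))
  refine measurable_of_tendsto_metrizable hr_meas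
    (tendsto_pi_nhds.2 fun x => (hf x).tendsto.comp ?_)
  have hge : ∀ n, x ≤ r n x := fun n => by
    rw [le_div_iff₀ (by positivity)]; exact Int.le_ceil _
  have hle : ∀ n, r n x ≤ x + 1 / (n + 1) := fun n => by
    rw [div_le_iff₀ (by positivity), add_mul, one_div_mul_cancel (by positivity)]
    exact (Int.ceil_lt_add_one _).le
  refine tendsto_nhdsWithin_iff.2 ⟨tendsto_of_tendsto_of_tendsto_of_le_of_le tendsto_const_nhds
    ?_ hge hle, .of_forall hge⟩
  simpa using tendsto_const_nhds.add (tendsto_one_div_add_atTop_nhds_zero_nat (𝕜 := ℝ)) (a := x)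

theorem le_of_continuousOn_of_antitoneOn_above {A : ℝ → ℝ} {a c η : ℝ} (hac : a ≤ c)
    (hA : ContinuousOn A (Icc a c)) (ha : A a ≤ η)
    (hanti : ∀ u ∈ Icc a c, ∀ v ∈ Icc u c, (∀ w ∈ Icc u v, η ≤ A w) → A v ≤ A u) :
    A c ≤ η := by
  have hclosed : IsClosed ({x | A x ≤ η} ∩ Icc a c) := by
    rw [inter_comm]; exact hA.preimage_isClosed_of_isClosed isClosed_Icc isClosed_Iic
  refine IsClosed.Icc_subset_of_forall_exists_gt hclosed ha ?_ ⟨hac, le_rfl⟩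
  rintro x ⟨hxη : A x ≤ η, hxa, hxc⟩ y hxy
  set y' := min y c
  have hxy' : x < y' := lt_min hxy hxc
  by_contra hnone
  have habove : ∀ z ∈ Ioc x y', η < A z := fun z hz => by
    by_contra! h
    exact hnone ⟨z, h, hz.1, hz.2.trans (min_le_left _ _)⟩
  have hcont : ContinuousOn A (Icc x y') := hA.mono (Icc_subset_Icc hxa (min_le_right _ _))
  have hx : η ≤ A x :=
    (continuousWithinAt_const.closure_le (by simp [closure_Ioc hxy'.ne, hxy'.le])
      ((hcont x ⟨le_rfl, hxy'.le⟩).mono Ioc_subset_Icc_self)) fun z hz => (habove z hz).le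
  have hy' := hanti x ⟨hxa, hxc.le⟩ y' ⟨hxy'.le, min_le_right _ _⟩ fun w hw =>
    hw.1.eq_or_lt.elim (fun h => h ▸ hx) fun h => (habove w ⟨h, hw.2⟩).le
  linarith [habove y' ⟨hxy', le_rfl⟩]

theorem IsUpperSet.monotone_indicator_const {α β : Type*} [Preorder α] [Preorder β] [Zero β]
    {s : Set α} (hs : IsUpperSet s) {c : β} (hc : 0 ≤ c) :
    Monotone (s.indicator fun _ => c) := by
  intro x y hxy
  by_cases hx : x ∈ s
  · simp [hx, hs hxy hx]
  · by_cases hy : y ∈ s <;> simp [hx, hy, hc]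

noncomputable def timeAbove (b : ℝ) (U : ℝ → ℝ) (s : ℝ) : ℝ :=
  ∫ v in (0:ℝ)..s, (Ioi b).indicator (fun _ => (1:ℝ)) (U v)

section timeAbove

variable {b : ℝ} {U V : ℝ → ℝ}

theorem intervalIntegrable_indicator_Ioi_comp (hU : Measurable U) (u v : ℝ) :
    IntervalIntegrable (fun w => (Ioi b).indicator (fun _ => (1:ℝ)) (U w)) volume u v :=
  (intervalIntegrable_const (c := (1:ℝ))).mono_fun'
    ((measurable_const.indicator measurableSet_Ioi).comp hU).aestronglyMeasurable
    (ae_of_all _ fun _ => (norm_indicator_le_norm_self _ _).trans_eq norm_one)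

@[simp]
theorem timeAbove_zero : timeAbove b U 0 = 0 :=
  intervalIntegral.integral_same

theorem continuous_timeAbove (hU : Measurable U) : Continuous (timeAbove b U) :=
  intervalIntegral.continuous_primitive (intervalIntegrable_indicator_Ioi_comp hU) 0

theorem timeAbove_sub_le_timeAbove_sub (hU : Measurable U) (hV : Measurable V) {u v : ℝ}
    (huv : u ≤ v) (hVU : ∀ w ∈ Icc u v, V w ≤ U w) :
    timeAbove b V v - timeAbove b V u ≤ timeAbove b U v - timeAbove b U u := by
  simp only [timeAbove]
  rw [intervalIntegral.integral_interval_sub_left (intervalIntegrable_indicator_Ioi_comp hV _ _)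
      (intervalIntegrable_indicator_Ioi_comp hV _ _),
    intervalIntegral.integral_interval_sub_left (intervalIntegrable_indicator_Ioi_comp hU _ _)
      (intervalIntegrable_indicator_Ioi_comp hU _ _)]
  exact intervalIntegral.integral_mono_on huv (intervalIntegrable_indicator_Ioi_comp hV _ _)
    (intervalIntegrable_indicator_Ioi_comp hU _ _) fun w hw =>
    (isUpperSet_Ioi b).monotone_indicator_const zero_le_one (hVU w hw)

end timeAbove

theorem mul_timeAbove_sub_le {b δ η t : ℝ} {U V : ℝ → ℝ} (hδ : 0 ≤ δ) (hη : 0 ≤ η)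
    (hU : Measurable U) (hV : Measurable V)
    (hVU : ∀ v ∈ Icc 0 t, η ≤ δ * (timeAbove b V v - timeAbove b U v) → V v ≤ U v) :
    ∀ s ∈ Icc 0 t, δ * (timeAbove b V s - timeAbove b U s) ≤ η := by
  intro s hs
  refine le_of_continuousOn_of_antitoneOn_above
    (A := fun s => δ * (timeAbove b V s - timeAbove b U s)) hs.1
    (((continuous_timeAbove hV).sub (continuous_timeAbove hU)).const_mul δ).continuousOn
    (by simpa using hη) fun u hu v hv hge => mul_le_mul_of_nonneg_left ?_ hδ
  have := timeAbove_sub_le_timeAbove_sub (b := b) hU hV hv.1 fun w hw =>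
    hVU w ⟨hu.1.trans hw.1, hw.2.trans (hv.2.trans hs.2)⟩ (hge w hw)
  linarith

theorem refraction_drift_le {b δ η t : ℝ} {Xn Xm Un Um : ℝ → ℝ} (hδ : 0 ≤ δ) (hη : 0 ≤ η)
    (hUn : Measurable Un) (hUm : Measurable Um)
    (hn : ∀ s ∈ Icc (0:ℝ) t, Un s = Xn s - δ * timeAbove b Un s)
    (hm : ∀ s ∈ Icc (0:ℝ) t, Um s = Xm s - δ * timeAbove b Um s)
    (hX : ∀ s ∈ Icc (0:ℝ) t, Xm s - Xn s < η) :
    ∀ s ∈ Icc (0:ℝ) t, (Un s - Um s) - (Xn s - Xm s) ≤ η := by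
  have hD : ∀ s ∈ Icc (0:ℝ) t,
      (Un s - Um s) - (Xn s - Xm s) = δ * (timeAbove b Um s - timeAbove b Un s) :=
    fun s hs => by rw [hn s hs, hm s hs]; ring
  intro s hs
  rw [hD s hs]
  exact mul_timeAbove_sub_le hδ hη hUn hUm
    (fun v hv hge => by linarith [hD v hv, hX v hv]) s hs

theorem refraction_stability_general (t η δ b : ℝ) (hη : 0 < η) (hδ : 0 < δ)
    (Xn Xm Un Um : ℝ → ℝ)
    (hUnrc : ∀ s, ContinuousWithinAt Un (Set.Ici s) s)
    (hUmrc : ∀ s, ContinuousWithinAt Um (Set.Ici s) s)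
    (hXclose : ∀ s ∈ Set.Icc (0:ℝ) t, |Xn s - Xm s| < η)
    (hn : ∀ s ∈ Set.Icc (0:ℝ) t, Un s = Xn s - δ * ∫ v in (0:ℝ)..s,
      (Set.Ioi b).indicator (fun _ => (1:ℝ)) (Un v))
    (hm : ∀ s ∈ Set.Icc (0:ℝ) t, Um s = Xm s - δ * ∫ v in (0:ℝ)..s,
      (Set.Ioi b).indicator (fun _ => (1:ℝ)) (Um v)) :
    (∀ s ∈ Set.Icc (0:ℝ) t, |Un s - Um s| < 2 * η) ∧
    (∀ s ∈ Set.Icc (0:ℝ) t, |(Un s - Um s) - (Xn s - Xm s)| ≤ η) := by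
  have hUn := measurable_of_continuousWithinAt_Ici hUnrc
  have hUm := measurable_of_continuousWithinAt_Ici hUmrc
  have hnm := refraction_drift_le hδ.le hη.le hUn hUm hn hm fun s hs =>
    (abs_sub_lt_iff.1 (hXclose s hs)).2
  have hmn := refraction_drift_le hδ.le hη.le hUm hUn hm hn fun s hs =>
    (abs_sub_lt_iff.1 (hXclose s hs)).1
  refine ⟨fun s hs => ?_, fun s hs => ?_⟩
  · have hX := abs_sub_lt_iff.1 (hXclose s hs)
    rw [abs_sub_lt_iff]
    constructor <;> linarith [hnm s hs, hmn s hs]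
  · rw [abs_le]
    constructor <;> linarith [hnm s hs, hmn s hs]

/-- Stability of the refraction equation: if the driving càdlàg paths are
uniformly `η`-close on `[0,t]`, then the corresponding solutions are
`2η`-close, and the drift difference term is bounded by `η`. -/
theorem refraction_stability (t η δ b : ℝ) (ht : 0 ≤ t) (hη : 0 < η) (hδ : 0 < δ)
    (Xn Xm Un Um : ℝ → ℝ)
    (hXnrc : ∀ s, ContinuousWithinAt Xn (Set.Ici s) s)
    (hXmrc : ∀ s, ContinuousWithinAt Xm (Set.Ici s) s)
    (hUnrc : ∀ s, ContinuousWithinAt Un (Set.Ici s) s)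
    (hUmrc : ∀ s, ContinuousWithinAt Um (Set.Ici s) s)
    (hXclose : ∀ s ∈ Set.Icc (0:ℝ) t, |Xn s - Xm s| < η)
    (hn : ∀ s ∈ Set.Icc (0:ℝ) t, Un s = Xn s - δ * ∫ v in (0:ℝ)..s,
      (Set.Ioi b).indicator (fun _ => (1:ℝ)) (Un v))
    (hm : ∀ s ∈ Set.Icc (0:ℝ) t, Um s = Xm s - δ * ∫ v in (0:ℝ)..s,
      (Set.Ioi b).indicator (fun _ => (1:ℝ)) (Um v)) :
    (∀ s ∈ Set.Icc (0:ℝ) t, |Un s - Um s| < 2 * η) ∧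
    (∀ s ∈ Set.Icc (0:ℝ) t, |(Un s - Um s) - (Xn s - Xm s)| ≤ η) :=
  refraction_stability_general t η δ b hη hδ Xn Xm Un Um hUnrc hUmrc hXclose hn hm
end

section
/- Let $X$ be a spectrally negative Lévy process of bounded variation with drift $c$ and Lévy measure $\Pi$, with $q$-scale function $W^{(q)}$. Then for all $b \geq 0$ and $\lambda > \Phi(q)$: $\int_0^\infty \int_{(y,\infty)} e^{-\lambda y}\, W^{(q)}(y - \theta + b)\, \Pi(d\theta)\, dy = c\, W^{(q)}(b) - (\psi(\lambda) - q)\, e^{\lambda b} \int_b^\infty e^{-\lambda x} W^{(q)}(x)\, dx$. -/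
/-!
Put `f s = e^{-λ s} W(s)` and let `F` be its primitive from `0`. By Fubini the left-hand side
equals `e^{λ b} K(b)`, where `K(a) = ∫ e^{-λθ} (F(a) - F(a - θ)) ν(dθ)` is `discountedIncrement`,
and the tail integral on the right is `1/(ψ(λ) - q) - F(b)`; so the identity reduces to
`K = c f - 1 + (ψ(λ) - q) F` on `[0, ∞)`. Both sides are continuous there, and a second use of
Fubini together with the Lévy–Khintchine form of `ψ` shows that both have Laplace transform
`c L - 1/β + (ψ(λ) - q) L/β`, `L = 1/(ψ(λ + β) - q)`, at every `β > 0`.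

Uniqueness of the Laplace transform comes from the substitution `x = e^{-t}`: vanishing
transforms give vanishing moments on `[0, 1]`, Weierstrass approximation upgrades these to all
continuous test functions of `e^{-t}`, and these include every compactly supported smooth function
of `t`.
-/

open MeasureTheory Set Filter Topology Real Polynomial

lemma integral_exp_neg_mul_Ioi {σ : ℝ} (hσ : 0 < σ) (a : ℝ) :
    ∫ x in Ioi a, exp (-σ * x) = exp (-σ * a) / σ := by
  rw [integral_exp_mul_Ioi (neg_lt_zero.2 hσ), neg_div_neg_eq]

lemma intervalIntegral_exp_neg_mul {σ : ℝ} (hσ : σ ≠ 0) (θ : ℝ) :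
    ∫ y in (0:ℝ)..θ, exp (-σ * y) = (1 - exp (-σ * θ)) / σ := by
  rw [intervalIntegral.integral_comp_mul_left (fun y => exp y) (neg_ne_zero.2 hσ), integral_exp,
    smul_eq_mul, mul_zero, exp_zero]
  field_simp
  ring

lemma one_sub_exp_neg_mul_le {t θ : ℝ} (hθ : 0 ≤ θ) :
    1 - exp (-t * θ) ≤ max 1 t * min 1 θ := by
  rcases le_total θ 1 with h | h
  · rw [min_eq_right h]
    nlinarith [add_one_le_exp (-t * θ), le_max_right 1 t]
  · rw [min_eq_left h, mul_one]
    linarith [exp_pos (-t * θ), le_max_left 1 t]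

lemma integrable_uncurry_of_integral_abs_le {α β : Type*} [MeasurableSpace α]
    [MeasurableSpace β] {μ : Measure α} {ν : Measure β} [SFinite μ] [SFinite ν]
    {F : α → β → ℝ} (hF : AEStronglyMeasurable (Function.uncurry F) (μ.prod ν))
    (hslice : ∀ᵐ y ∂ν, Integrable (F · y) μ) {g : β → ℝ} (hg : Integrable g ν)
    (hbound : ∀ᵐ y ∂ν, ∫ x, |F x y| ∂μ ≤ g y) :
    Integrable (Function.uncurry F) (μ.prod ν) := by
  refine (integrable_prod_iff' hF).2 ⟨hslice, hg.mono' hF.norm.prod_swap.integral_prod_right' ?_⟩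
  filter_upwards [hbound] with y hy
  rw [Real.norm_of_nonneg (integral_nonneg fun _ => norm_nonneg _)]
  simpa only [Function.uncurry_apply_pair, Real.norm_eq_abs] using hy

section LevyMeasure

variable {ν : Measure ℝ}

lemma measure_Ici_lt_top_of_lintegral_min_one_ne_top
    (hν : ∫⁻ x in Ioi 0, ENNReal.ofReal (min 1 x) ∂ν ≠ ⊤) {ε : ℝ} (hε : 0 < ε) :
    ν (Ici ε) < ⊤ := by
  have hpos : ENNReal.ofReal (min 1 ε) ≠ 0 := by simp [hε]
  refine ENNReal.lt_top_of_mul_ne_top_right (ne_top_of_le_ne_top hν ?_) hpos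
  calc ENNReal.ofReal (min 1 ε) * ν (Ici ε) = ∫⁻ _ in Ici ε, ENNReal.ofReal (min 1 ε) ∂ν :=
        (setLIntegral_const _ _).symm
    _ ≤ ∫⁻ x in Ici ε, ENNReal.ofReal (min 1 x) ∂ν :=
        setLIntegral_mono' measurableSet_Ici fun x hx =>
          ENNReal.ofReal_le_ofReal (min_le_min le_rfl hx)
    _ ≤ ∫⁻ x in Ioi 0, ENNReal.ofReal (min 1 x) ∂ν :=
        lintegral_mono_set (Ici_subset_Ioi.2 hε)

lemma sigmaFinite_restrict_Ioi_of_lintegral_min_one_ne_top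
    (hν : ∫⁻ x in Ioi 0, ENNReal.ofReal (min 1 x) ∂ν ≠ ⊤) :
    SigmaFinite (ν.restrict (Ioi 0)) := by
  refine ⟨⟨⟨fun n => Iic 0 ∪ Ici (1 / (n + 1)), fun _ => trivial, fun n => ?_, ?_⟩⟩⟩
  · rw [Measure.restrict_apply' measurableSet_Ioi, union_inter_distrib_right,
      Iic_inter_Ioi, Ioc_self, empty_union]
    exact (measure_mono inter_subset_left).trans_lt
      (measure_Ici_lt_top_of_lintegral_min_one_ne_top hν (by positivity))
  · refine eq_univ_of_forall fun x => mem_iUnion.2 ?_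
    rcases le_or_gt x 0 with hx | hx
    · exact ⟨0, Or.inl hx⟩
    · obtain ⟨n, hn⟩ := exists_nat_one_div_lt hx
      exact ⟨n, Or.inr hn.le⟩

lemma integrable_min_one_of_lintegral_ne_top
    (hν : ∫⁻ x in Ioi 0, ENNReal.ofReal (min 1 x) ∂ν ≠ ⊤) :
    Integrable (fun x => min 1 x) (ν.restrict (Ioi 0)) := by
  refine ⟨(continuous_const.min continuous_id).aestronglyMeasurable, ?_⟩
  rw [hasFiniteIntegral_iff_ofReal]
  · exact hν.lt_top
  · filter_upwards [ae_restrict_mem measurableSet_Ioi] with x hx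
    exact le_min zero_le_one (le_of_lt hx)

lemma integrable_one_sub_exp_neg_mul
    (hν : ∫⁻ x in Ioi 0, ENNReal.ofReal (min 1 x) ∂ν ≠ ⊤) {t : ℝ} (ht : 0 ≤ t) :
    Integrable (fun θ => 1 - exp (-t * θ)) (ν.restrict (Ioi 0)) := by
  refine ((integrable_min_one_of_lintegral_ne_top hν).const_mul (max 1 t)).mono' (by fun_prop) ?_
  filter_upwards [ae_restrict_mem measurableSet_Ioi] with θ hθ
  rw [Real.norm_of_nonneg (sub_nonneg.2 (exp_le_one_iff.2 (by nlinarith [mem_Ioi.1 hθ])))]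
  exact one_sub_exp_neg_mul_le (le_of_lt hθ)

end LevyMeasure

section Primitive

variable {f : ℝ → ℝ}

lemma intervalIntegral_eq_zero_of_nonpos (hf0 : ∀ x < 0, f x = 0) {t : ℝ} (ht : t ≤ 0) :
    ∫ s in (0:ℝ)..t, f s = 0 := by
  rw [intervalIntegral.integral_of_ge ht, integral_Ioc_eq_integral_Ioo,
    setIntegral_eq_zero_of_forall_eq_zero fun x hx => hf0 x hx.2, neg_zero]

lemma abs_intervalIntegral_le_integral_abs (hf : Integrable f) (a b : ℝ) :
    |∫ s in a..b, f s| ≤ ∫ s, |f s| :=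
  (intervalIntegral.norm_integral_le_integral_norm_uIoc (f := f)).trans
    (setIntegral_le_integral hf.norm (Eventually.of_forall fun _ => norm_nonneg _))

lemma abs_intervalIntegral_sub_le_mul_min_one (hf : Integrable f) {a M : ℝ}
    (hM : ∀ x ≤ a, |f x| ≤ M) {θ : ℝ} (hθ : 0 ≤ θ) :
    |∫ s in (a - θ)..a, f s| ≤ max (∫ s, |f s|) M * min 1 θ := by
  rcases le_total θ 1 with h | h
  · have hloc : |∫ s in (a - θ)..a, f s| ≤ M * θ := by
      simpa [abs_of_nonneg hθ] using intervalIntegral.norm_integral_le_of_norm_le_const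
        (a := a - θ) (b := a) (C := M) (f := f) fun x hx => by
          rw [uIoc_of_le (by linarith : a - θ ≤ a)] at hx
          exact (Real.norm_eq_abs _).trans_le (hM x hx.2)
    rw [min_eq_right h]
    exact hloc.trans (mul_le_mul_of_nonneg_right (le_max_right _ _) hθ)
  · rw [min_eq_left h, mul_one]
    exact (abs_intervalIntegral_le_integral_abs hf _ _).trans (le_max_left _ _)

lemma continuous_intervalIntegral_sub (hf : Integrable f) :
    Continuous fun p : ℝ × ℝ => ∫ s in (p.1 - p.2)..p.1, f s := by
  have hG := intervalIntegral.continuous_primitive (fun _ _ => hf.intervalIntegrable) (0:ℝ)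
  have : (fun p : ℝ × ℝ => ∫ s in (p.1 - p.2)..p.1, f s)
      = fun p => (∫ s in (0:ℝ)..p.1, f s) - ∫ s in (0:ℝ)..(p.1 - p.2), f s := by
    ext p
    rw [intervalIntegral.integral_interval_sub_left hf.intervalIntegrable hf.intervalIntegrable]
  rw [this]
  exact (hG.comp continuous_fst).sub (hG.comp (continuous_fst.sub continuous_snd))

lemma integral_Ioi_eq_sub_intervalIntegral (hf : IntegrableOn f (Ioi 0)) {b : ℝ} (hb : 0 ≤ b) :
    ∫ x in Ioi b, f x = (∫ x in Ioi 0, f x) - ∫ x in (0:ℝ)..b, f x := by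
  have hsplit := setIntegral_union (Ioc_disjoint_Ioi le_rfl) measurableSet_Ioi
    (hf.mono_set Ioc_subset_Ioi_self) (hf.mono_set (Ioi_subset_Ioi hb))
  rw [Ioc_union_Ioi_eq_Ioi hb] at hsplit
  rw [intervalIntegral.integral_of_le hb]
  exact eq_sub_of_add_eq' hsplit.symm

lemma abs_intervalIntegral_le_sub_intervalIntegral_abs (hf : Integrable f) (a : ℝ)
    {θ : ℝ} (hθ : 0 ≤ θ) :
    |∫ s in (a - θ)..a, f s| ≤ (∫ s in (0:ℝ)..a, |f s|) - ∫ s in (0:ℝ)..(a - θ), |f s| := by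
  rw [intervalIntegral.integral_interval_sub_left hf.abs.intervalIntegrable
    hf.abs.intervalIntegrable]
  exact intervalIntegral.abs_integral_le_integral_abs (by linarith)

end Primitive

section VanishingOnNegatives

variable {w : ℝ → ℝ}

lemma measurable_of_continuousOn_Ici_of_eq_zero (hw : ContinuousOn w (Ici 0))
    (hw0 : ∀ x < 0, w x = 0) : Measurable w := by
  refine measurable_of_continuousOn_compl_singleton 0 fun x hx => ?_
  rcases (show x ≠ 0 from hx).lt_or_gt with h | h
  · exact (continuousAt_const.congr (eventuallyEq_of_mem (Iio_mem_nhds h)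
      fun y hy => (hw0 y hy).symm)).continuousWithinAt
  · exact (hw.continuousAt (Ici_mem_nhds h)).continuousWithinAt

lemma exists_abs_le_of_continuousOn_Ici_of_eq_zero (hw : ContinuousOn w (Ici 0))
    (hw0 : ∀ x < 0, w x = 0) (R : ℝ) : ∃ M, ∀ x ≤ R, |w x| ≤ M := by
  obtain ⟨M, hM⟩ := isCompact_Icc.exists_bound_of_continuousOn
    (hw.mono (Icc_subset_Ici_self : Icc (0:ℝ) R ⊆ Ici 0))
  refine ⟨max M 0, fun x hx => ?_⟩
  rcases lt_or_ge x 0 with h | h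
  · simp [hw0 x h]
  · exact (hM x ⟨h, hx⟩).trans (le_max_left _ _)

lemma integrable_of_integrableOn_Ioi_of_eq_zero (hw : IntegrableOn w (Ioi 0))
    (hw0 : ∀ x < 0, w x = 0) : Integrable w :=
  ((integrableOn_Ici_iff_integrableOn_Ioi enorm_ne_top).2 hw).integrable_of_forall_notMem_eq_zero
    fun x hx => hw0 x (not_le.1 hx)

end VanishingOnNegatives

section LaplaceTransform

lemma integrableOn_exp_neg_mul_mul_of_abs_le {g : ℝ → ℝ} (hg : AEStronglyMeasurable g)
    {C : ℝ} (hgC : ∀ t, |g t| ≤ C) {β : ℝ} (hβ : 0 < β) :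
    IntegrableOn (fun a => exp (-β * a) * g a) (Ioi 0) :=
  (exp_neg_integrableOn_Ioi 0 hβ).mul_bdd hg.restrict (Eventually.of_forall hgC)

lemma integral_exp_neg_mul_comp_sub {g : ℝ → ℝ} (hg : ∀ t ≤ 0, g t = 0) (β : ℝ) {θ : ℝ}
    (hθ : 0 ≤ θ) :
    ∫ a in Ioi 0, exp (-β * a) * g (a - θ) = exp (-β * θ) * ∫ a in Ioi 0, exp (-β * a) * g a := by
  set H := (Ioi (0:ℝ)).indicator fun a => exp (-β * a) * g a
  have hshift : (Ioi (0:ℝ)).indicator (fun a => exp (-β * a) * g (a - θ))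
      = fun a => exp (-β * θ) * H (a - θ) := by
    ext a
    simp only [H, indicator_apply, mem_Ioi]
    by_cases ha : 0 < a - θ
    · rw [if_pos (by linarith), if_pos ha, ← mul_assoc, ← exp_add]
      ring_nf
    · rw [if_neg ha, hg _ (not_lt.1 ha)]
      simp
  rw [← integral_indicator measurableSet_Ioi, hshift, integral_const_mul,
    integral_sub_right_eq_self H θ, integral_indicator measurableSet_Ioi]

lemma integral_exp_neg_mul_mul_sub_comp_sub {g : ℝ → ℝ} (hg : Continuous g) {C : ℝ}
    (hgC : ∀ t, |g t| ≤ C) (hg0 : ∀ t ≤ 0, g t = 0) {β : ℝ} (hβ : 0 < β) {θ : ℝ}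
    (hθ : 0 ≤ θ) :
    ∫ a in Ioi 0, exp (-β * a) * (g a - g (a - θ))
      = (1 - exp (-β * θ)) * ∫ a in Ioi 0, exp (-β * a) * g a := by
  simp only [mul_sub]
  have hshift := integrableOn_exp_neg_mul_mul_of_abs_le (g := fun t => g (t - θ))
    (hg.comp (continuous_sub_right θ)).aestronglyMeasurable (fun t => hgC (t - θ)) hβ
  rw [integral_sub (integrableOn_exp_neg_mul_mul_of_abs_le hg.aestronglyMeasurable hgC hβ) hshift,
    integral_exp_neg_mul_comp_sub hg0 β hθ]
  ring

lemma integral_exp_neg_mul_mul_intervalIntegral {f : ℝ → ℝ} (hf : IntegrableOn f (Ioi 0))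
    {σ : ℝ} (hσ : 0 < σ) :
    ∫ t in Ioi 0, exp (-σ * t) * ∫ s in (0:ℝ)..t, f s
      = σ⁻¹ * ∫ s in Ioi 0, exp (-σ * s) * f s := by
  set μ := volume.restrict (Ioi (0:ℝ))
  set F : ℝ × ℝ → ℝ := {p | p.2 ≤ p.1}.indicator fun p => exp (-σ * p.1) * f p.2
  have hF : Integrable F (μ.prod μ) :=
    ((exp_neg_integrableOn_Ioi 0 hσ).mul_prod hf).indicator
      (measurableSet_le measurable_snd measurable_fst)
  have hinner_s : ∀ t ∈ Ioi (0:ℝ), ∫ s, F (t, s) ∂μ = exp (-σ * t) * ∫ s in (0:ℝ)..t, f s := by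
    intro t ht
    have : (fun s => F (t, s)) = (Iic t).indicator fun s => exp (-σ * t) * f s := by
      ext s; simp [F, indicator_apply]
    rw [this, integral_indicator measurableSet_Iic, Measure.restrict_restrict measurableSet_Iic,
      inter_comm, Ioi_inter_Iic, integral_const_mul, intervalIntegral.integral_of_le (le_of_lt ht)]
  have hinner_t : ∀ s ∈ Ioi (0:ℝ), ∫ t, F (t, s) ∂μ = σ⁻¹ * (exp (-σ * s) * f s) := by
    intro s hs
    have : (fun t => F (t, s)) = (Ici s).indicator fun t => exp (-σ * t) * f s := by
      ext t; simp [F, indicator_apply]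
    rw [this, integral_indicator measurableSet_Ici, Measure.restrict_restrict measurableSet_Ici,
      inter_eq_self_of_subset_left (Ici_subset_Ioi.2 hs), integral_Ici_eq_integral_Ioi,
      integral_mul_const, integral_exp_neg_mul_Ioi hσ]
    field_simp
  calc ∫ t in Ioi 0, exp (-σ * t) * ∫ s in (0:ℝ)..t, f s
      = ∫ t, ∫ s, F (t, s) ∂μ ∂μ := (setIntegral_congr_fun measurableSet_Ioi hinner_s).symm
    _ = ∫ s, ∫ t, F (t, s) ∂μ ∂μ := integral_integral_swap hF
    _ = ∫ s in Ioi 0, σ⁻¹ * (exp (-σ * s) * f s) := setIntegral_congr_fun measurableSet_Ioi hinner_t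
    _ = σ⁻¹ * ∫ s in Ioi 0, exp (-σ * s) * f s := integral_const_mul _ _

lemma integral_exp_neg_mul_mul_affine_primitive {f : ℝ → ℝ} (hf : Integrable f) {β : ℝ}
    (hβ : 0 < β) (c k : ℝ) :
    IntegrableOn (fun a => exp (-β * a) * (c * f a - 1 + k * ∫ s in (0:ℝ)..a, f s)) (Ioi 0)
      ∧ ∫ a in Ioi 0, exp (-β * a) * (c * f a - 1 + k * ∫ s in (0:ℝ)..a, f s)
        = (c + k * β⁻¹) * (∫ s in Ioi 0, exp (-β * s) * f s) - β⁻¹ := by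
  set G := fun t => ∫ s in (0:ℝ)..t, f s
  have hfβ : IntegrableOn (fun s => exp (-β * s) * f s) (Ioi 0) := by
    refine hf.integrableOn.bdd_mul (c := 1)
      (continuous_exp.comp (continuous_const_mul (-β))).aestronglyMeasurable ?_
    filter_upwards [ae_restrict_mem measurableSet_Ioi] with s hs
    rw [Real.norm_of_nonneg (exp_pos _).le]
    exact exp_le_one_iff.2 (by nlinarith [mem_Ioi.1 hs])
  have h₁ : IntegrableOn (fun a => c * (exp (-β * a) * f a) - exp (-β * a)) (Ioi 0) :=
    (hfβ.const_mul c).sub (exp_neg_integrableOn_Ioi 0 hβ)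
  have hGc : Continuous G :=
    intervalIntegral.continuous_primitive (fun _ _ => hf.intervalIntegrable) 0
  have h₂ : IntegrableOn (fun a => k * (exp (-β * a) * G a)) (Ioi 0) :=
    (integrableOn_exp_neg_mul_mul_of_abs_le hGc.aestronglyMeasurable
      (abs_intervalIntegral_le_integral_abs hf 0) hβ).const_mul k
  have hsplit : (fun a => exp (-β * a) * (c * f a - 1 + k * G a))
      = fun a => (c * (exp (-β * a) * f a) - exp (-β * a)) + k * (exp (-β * a) * G a) := by
    ext a; ring
  rw [hsplit]
  refine ⟨h₁.add h₂, ?_⟩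
  rw [integral_add h₁ h₂, integral_sub (hfβ.const_mul c) (exp_neg_integrableOn_Ioi 0 hβ),
    integral_const_mul, integral_const_mul,
    integral_exp_neg_mul_mul_intervalIntegral hf.integrableOn hβ, integral_exp_neg_mul_Ioi hβ,
    mul_zero, exp_zero]
  ring

lemma setIntegral_Ioi_indicator_Iio {g : ℝ → ℝ} {θ : ℝ} (hθ : 0 ≤ θ) :
    ∫ y in Ioi 0, (Iio θ).indicator g y = ∫ y in (0:ℝ)..θ, g y := by
  rw [integral_indicator measurableSet_Iio, Measure.restrict_restrict measurableSet_Iio,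
    inter_comm, Ioi_inter_Iio, intervalIntegral.integral_of_le hθ, integral_Ioc_eq_integral_Ioo]

lemma setIntegral_Ioi_indicator_Iio_exp_neg_mul_comp (lam b : ℝ) (w : ℝ → ℝ) {θ : ℝ}
    (hθ : 0 ≤ θ) :
    ∫ y in Ioi 0, (Iio θ).indicator (fun y => exp (-lam * y) * w (y - θ + b)) y
      = exp (lam * b) * (exp (-lam * θ) * ∫ s in (b - θ)..b, exp (-lam * s) * w s) := by
  have : ∀ y, exp (-lam * y) * w (y - θ + b)
      = exp (lam * b) * exp (-lam * θ) * (exp (-lam * (y + (b - θ))) * w (y + (b - θ))) := by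
    intro y
    rw [← exp_add, ← mul_assoc, ← exp_add, show y - θ + b = y + (b - θ) by ring]
    ring_nf
  simp only [setIntegral_Ioi_indicator_Iio hθ, this, intervalIntegral.integral_const_mul]
  rw [intervalIntegral.integral_comp_add_right (fun s => exp (-lam * s) * w s), zero_add,
    add_sub_cancel, mul_assoc]

end LaplaceTransform

section LaplaceUniqueness

variable {φ : ℝ → ℝ}

lemma integrableOn_comp_exp_neg_mul (hφ : IntegrableOn φ (Ioi 0)) {F : ℝ → ℝ}
    (hF : Continuous F) : IntegrableOn (fun t => F (exp (-t)) * φ t) (Ioi 0) := by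
  obtain ⟨C, hC⟩ := isCompact_Icc.exists_bound_of_continuousOn (hF.continuousOn (s := Icc 0 1))
  refine hφ.bdd_mul (c := C) (hF.comp (continuous_exp.comp continuous_neg)).aestronglyMeasurable ?_
  filter_upwards [ae_restrict_mem measurableSet_Ioi] with t ht
  exact hC _ ⟨(exp_pos _).le, exp_le_one_iff.2 (neg_nonpos.2 (le_of_lt ht))⟩

lemma integral_eval_exp_neg_mul_eq_zero (hφ : IntegrableOn φ (Ioi 0))
    (hmom : ∀ n : ℕ, ∫ t in Ioi 0, exp (-t) ^ n * φ t = 0) (p : ℝ[X]) :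
    ∫ t in Ioi 0, p.eval (exp (-t)) * φ t = 0 := by
  induction p using Polynomial.induction_on' with
  | add p r hp hr =>
    simp only [eval_add, add_mul]
    rw [integral_add (integrableOn_comp_exp_neg_mul hφ p.continuous)
      (integrableOn_comp_exp_neg_mul hφ r.continuous), hp, hr, add_zero]
  | monomial n a =>
    simp only [eval_monomial, mul_assoc, integral_const_mul, hmom, mul_zero]

lemma integral_comp_exp_neg_mul_eq_zero (hφ : IntegrableOn φ (Ioi 0))
    (hmom : ∀ n : ℕ, ∫ t in Ioi 0, exp (-t) ^ n * φ t = 0) {F : ℝ → ℝ} (hF : Continuous F) :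
    ∫ t in Ioi 0, F (exp (-t)) * φ t = 0 := by
  refine abs_nonpos_iff.1 (le_of_forall_pos_le_add fun δ hδ => ?_)
  set C := ∫ t in Ioi 0, |φ t|
  have hC : 0 ≤ C := setIntegral_nonneg measurableSet_Ioi fun _ _ => abs_nonneg _
  obtain ⟨p, hp⟩ := exists_polynomial_near_of_continuousOn 0 1 F hF.continuousOn
    (δ / (C + 1)) (by positivity)
  have hFp : ∫ t in Ioi 0, F (exp (-t)) * φ t
      = ∫ t in Ioi 0, (F (exp (-t)) - p.eval (exp (-t))) * φ t := by
    simp only [sub_mul]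
    rw [integral_sub (integrableOn_comp_exp_neg_mul hφ hF)
      (integrableOn_comp_exp_neg_mul hφ p.continuous),
      integral_eval_exp_neg_mul_eq_zero hφ hmom, sub_zero]
  calc |∫ t in Ioi 0, F (exp (-t)) * φ t|
      ≤ ∫ t in Ioi 0, δ / (C + 1) * |φ t| := by
        rw [hFp, ← Real.norm_eq_abs]
        refine norm_integral_le_of_norm_le (hφ.norm.const_mul _) ?_
        filter_upwards [ae_restrict_mem measurableSet_Ioi] with t ht
        rw [norm_mul, Real.norm_eq_abs, Real.norm_eq_abs, abs_sub_comm]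
        exact mul_le_mul_of_nonneg_right (hp _ ⟨(exp_pos _).le,
          exp_le_one_iff.2 (neg_nonpos.2 (le_of_lt ht))⟩).le (abs_nonneg _)
    _ = δ / (C + 1) * C := integral_const_mul _ _
    _ ≤ 0 + δ := by
        rw [zero_add, div_mul_eq_mul_div, div_le_iff₀ (by positivity)]
        nlinarith

lemma exists_continuous_comp_exp_neg_eq {g : ℝ → ℝ} (hg : Continuous g)
    (hg0 : Tendsto g atTop (𝓝 0)) : ∃ F : ℝ → ℝ, Continuous F ∧ ∀ t, F (exp (-t)) = g t := by
  refine ⟨fun x => if 0 < x then g (-log x) else 0, ?_, fun t => by simp [exp_pos]⟩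
  rw [continuous_iff_continuousAt]
  intro x
  rcases lt_trichotomy x 0 with hx | rfl | hx
  · refine (continuousAt_const (y := (0:ℝ))).congr
      (eventuallyEq_of_mem (Iio_mem_nhds hx) fun y hy => ?_)
    simp [not_lt.2 (le_of_lt (mem_Iio.1 hy))]
  · rw [continuousAt_iff_continuous_left_right]
    constructor
    · refine (continuousWithinAt_const (b := (0:ℝ))).congr (fun y hy => ?_) (by simp)
      simp [not_lt.2 (mem_Iic.1 hy)]
    · rw [← continuousWithinAt_Ioi_iff_Ici, ContinuousWithinAt, if_neg (lt_irrefl 0)]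
      refine (hg0.comp (tendsto_neg_atBot_atTop.comp tendsto_log_nhdsGT_zero)).congr' ?_
      filter_upwards [self_mem_nhdsWithin] with y hy
      simp [mem_Ioi.1 hy]
  · refine ((hg.comp continuous_neg).continuousAt.comp (continuousAt_log hx.ne')).congr
      (eventuallyEq_of_mem (Ioi_mem_nhds hx) fun y hy => ?_)
    simp [mem_Ioi.1 hy]

lemma ae_eq_zero_of_integral_exp_neg_pow_mul_eq_zero (hφ : IntegrableOn φ (Ioi 0))
    (hmom : ∀ n : ℕ, ∫ t in Ioi 0, exp (-t) ^ n * φ t = 0) :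
    ∀ᵐ t ∂(volume.restrict (Ioi 0)), φ t = 0 := by
  refine ae_eq_zero_of_integral_contDiff_smul_eq_zero hφ.locallyIntegrable fun g hg hgc => ?_
  obtain ⟨F, hF, hFg⟩ := exists_continuous_comp_exp_neg_eq hg.continuous
    (hgc.is_zero_at_infty.mono_left atTop_le_cocompact)
  simp_rw [smul_eq_mul, ← hFg]
  exact integral_comp_exp_neg_mul_eq_zero hφ hmom hF

lemma eqOn_zero_of_laplace_eq_zero {h : ℝ → ℝ} (hh : ContinuousOn h (Ici 0)) {β₀ : ℝ}
    (hint : ∀ β > β₀, IntegrableOn (fun t => exp (-β * t) * h t) (Ioi 0))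
    (hzero : ∀ β > β₀, ∫ t in Ioi 0, exp (-β * t) * h t = 0) :
    EqOn h 0 (Ici 0) := by
  have hmom : ∀ n : ℕ, ∫ t in Ioi 0, exp (-t) ^ n * (exp (-(β₀ + 1) * t) * h t) = 0 := by
    intro n
    refine (setIntegral_congr_fun measurableSet_Ioi fun t _ => ?_).trans
      (hzero (β₀ + 1 + n) (by linarith [n.cast_nonneg (α := ℝ)]))
    rw [← exp_nat_mul, ← mul_assoc, ← exp_add]
    ring_nf
  have hae := ae_eq_zero_of_integral_exp_neg_pow_mul_eq_zero (hint _ (lt_add_one β₀)) hmom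
  refine Measure.eqOn_of_ae_eq (μ := volume) ?_ hh continuousOn_const (by simp)
  rw [Measure.restrict_congr_set Ioi_ae_eq_Ici.symm]
  filter_upwards [hae] with t ht
  exact (mul_eq_zero.1 ht).resolve_left (exp_pos _).ne'

end LaplaceUniqueness

noncomputable def discountedIncrement (ν : Measure ℝ) (lam : ℝ) (f : ℝ → ℝ) (a : ℝ) : ℝ :=
  ∫ θ in Ioi 0, exp (-lam * θ) * (∫ s in (a - θ)..a, f s) ∂ν

section DiscountedIncrement

variable {ν : Measure ℝ} {lam : ℝ} {f : ℝ → ℝ}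

lemma continuous_discountedIncrement (hν : ∫⁻ x in Ioi 0, ENNReal.ofReal (min 1 x) ∂ν ≠ ⊤)
    (hlam : 0 ≤ lam) (hf : Integrable f) (hbdd : ∀ R, ∃ M, ∀ x ≤ R, |f x| ≤ M) :
    Continuous (discountedIncrement ν lam f) := by
  have hF := continuous_intervalIntegral_sub hf
  rw [continuous_iff_continuousAt]
  intro a₀
  unfold discountedIncrement
  obtain ⟨M, hM⟩ := hbdd (a₀ + 1)
  refine continuousAt_of_dominated (μ := ν.restrict (Ioi 0)) (x₀ := a₀)
    (F := fun a θ => exp (-lam * θ) * ∫ s in (a - θ)..a, f s)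
    (bound := fun θ => max (∫ s, |f s|) M * min 1 θ) ?_ ?_
    ((integrable_min_one_of_lintegral_ne_top hν).const_mul _) ?_
  · exact Eventually.of_forall fun a => (((continuous_const.mul continuous_id).rexp).mul
      (hF.comp (continuous_const.prodMk continuous_id))).aestronglyMeasurable
  · filter_upwards [Metric.ball_mem_nhds a₀ one_pos] with a ha
    filter_upwards [ae_restrict_mem measurableSet_Ioi] with θ hθ
    have ha' : a ≤ a₀ + 1 := by
      linarith [(abs_lt.1 (Real.dist_eq a a₀ ▸ Metric.mem_ball.1 ha)).2]
    rw [norm_mul, Real.norm_of_nonneg (exp_pos _).le, Real.norm_eq_abs]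
    exact (mul_le_of_le_one_left (abs_nonneg _)
      (exp_le_one_iff.2 (by nlinarith [mem_Ioi.1 hθ]))).trans
      (abs_intervalIntegral_sub_le_mul_min_one hf (fun x hx => hM x (hx.trans ha'))
        (le_of_lt hθ))
  · exact Eventually.of_forall fun θ =>
      (continuous_const.mul (hF.comp (continuous_id.prodMk continuous_const))).continuousAt

lemma integrable_exp_neg_mul_mul_discountedIncrement_integrand
    (hν : ∫⁻ x in Ioi 0, ENNReal.ofReal (min 1 x) ∂ν ≠ ⊤) (hlam : 0 ≤ lam) (hf : Integrable f)
    (hf0 : ∀ x < 0, f x = 0) {β : ℝ} (hβ : 0 < β) :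
    Integrable
      (Function.uncurry fun a θ => exp (-β * a) * (exp (-lam * θ) * ∫ s in (a - θ)..a, f s))
      ((volume.restrict (Ioi 0)).prod (ν.restrict (Ioi 0))) := by
  have := sigmaFinite_restrict_Ioi_of_lintegral_min_one_ne_top hν
  set A := fun t => ∫ s in (0:ℝ)..t, |f s|
  have hAc : Continuous A :=
    intervalIntegral.continuous_primitive (fun _ _ => hf.abs.intervalIntegrable) 0
  have hAC : ∀ t, |A t| ≤ ∫ s, |f s| := fun t => by
    simpa only [abs_abs] using abs_intervalIntegral_le_integral_abs hf.abs 0 t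
  have hA0 : ∀ t ≤ 0, A t = 0 := fun t =>
    intervalIntegral_eq_zero_of_nonpos fun x hx => by simp [hf0 x hx]
  have hF := continuous_intervalIntegral_sub hf
  refine integrable_uncurry_of_integral_abs_le ?_ ?_
    ((integrable_one_sub_exp_neg_mul hν hβ.le).mul_const (∫ a in Ioi 0, exp (-β * a) * A a)) ?_
  · exact (((continuous_const.mul continuous_fst).rexp).mul
      (((continuous_const.mul continuous_snd).rexp).mul hF)).aestronglyMeasurable
  · refine Eventually.of_forall fun θ => integrableOn_exp_neg_mul_mul_of_abs_le
      (g := fun a => exp (-lam * θ) * ∫ s in (a - θ)..a, f s) (C := exp (-lam * θ) * ∫ s, |f s|)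
      (continuous_const.mul (hF.comp (continuous_id.prodMk continuous_const))).aestronglyMeasurable
      (fun a => ?_) hβ
    rw [abs_mul, abs_of_pos (exp_pos _)]
    exact mul_le_mul_of_nonneg_left (abs_intervalIntegral_le_integral_abs hf _ _) (exp_pos _).le
  · filter_upwards [ae_restrict_mem measurableSet_Ioi] with θ hθ
    rw [← integral_exp_neg_mul_mul_sub_comp_sub hAc hAC hA0 hβ (le_of_lt hθ)]
    refine integral_mono_of_nonneg (Eventually.of_forall fun _ => abs_nonneg _)
      (integrableOn_exp_neg_mul_mul_of_abs_le (g := fun a => A a - A (a - θ))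
        (hAc.sub (hAc.comp (continuous_sub_right θ))).aestronglyMeasurable
        (C := 2 * ∫ s, |f s|) (fun a => ?_) hβ)
      (Eventually.of_forall fun a => ?_)
    · exact (abs_sub _ _).trans (by linarith [hAC a, hAC (a - θ)])
    · simp only [abs_mul, abs_of_pos (exp_pos _)]
      refine mul_le_mul_of_nonneg_left ?_ (exp_pos _).le
      exact (mul_le_of_le_one_left (abs_nonneg _)
        (exp_le_one_iff.2 (by nlinarith [mem_Ioi.1 hθ]))).trans
        (abs_intervalIntegral_le_sub_intervalIntegral_abs hf a (le_of_lt hθ))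

lemma integrableOn_exp_neg_mul_mul_discountedIncrement
    (hν : ∫⁻ x in Ioi 0, ENNReal.ofReal (min 1 x) ∂ν ≠ ⊤) (hlam : 0 ≤ lam) (hf : Integrable f)
    (hf0 : ∀ x < 0, f x = 0) {β : ℝ} (hβ : 0 < β) :
    IntegrableOn (fun a => exp (-β * a) * discountedIncrement ν lam f a) (Ioi 0) := by
  have := sigmaFinite_restrict_Ioi_of_lintegral_min_one_ne_top hν
  refine (integrable_exp_neg_mul_mul_discountedIncrement_integrand hν hlam hf hf0 hβ
    ).integral_prod_left.congr (Eventually.of_forall fun a => ?_)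
  simp only [discountedIncrement, Function.uncurry_apply_pair, integral_const_mul]

lemma integral_exp_neg_mul_mul_discountedIncrement
    (hν : ∫⁻ x in Ioi 0, ENNReal.ofReal (min 1 x) ∂ν ≠ ⊤) (hlam : 0 ≤ lam) (hf : Integrable f)
    (hf0 : ∀ x < 0, f x = 0) {β : ℝ} (hβ : 0 < β) :
    ∫ a in Ioi 0, exp (-β * a) * discountedIncrement ν lam f a
      = (∫ θ in Ioi 0, (exp (-lam * θ) - exp (-(lam + β) * θ)) ∂ν)
        * (β⁻¹ * ∫ s in Ioi 0, exp (-β * s) * f s) := by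
  have := sigmaFinite_restrict_Ioi_of_lintegral_min_one_ne_top hν
  set G := fun t => ∫ s in (0:ℝ)..t, f s
  have hGc : Continuous G :=
    intervalIntegral.continuous_primitive (fun _ _ => hf.intervalIntegrable) 0
  have hGC : ∀ t, |G t| ≤ ∫ s, |f s| := abs_intervalIntegral_le_integral_abs hf 0
  have hG0 : ∀ t ≤ 0, G t = 0 := fun t => intervalIntegral_eq_zero_of_nonpos hf0
  have hinner : ∀ θ ∈ Ioi (0:ℝ),
      ∫ a in Ioi 0, exp (-β * a) * (exp (-lam * θ) * ∫ s in (a - θ)..a, f s)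
      = (exp (-lam * θ) - exp (-(lam + β) * θ)) * (β⁻¹ * ∫ s in Ioi 0, exp (-β * s) * f s) := by
    intro θ hθ
    have hG : ∀ a, ∫ s in (a - θ)..a, f s = G a - G (a - θ) := fun a =>
      (intervalIntegral.integral_interval_sub_left hf.intervalIntegrable
        hf.intervalIntegrable).symm
    simp only [hG, mul_left_comm (exp (-β * _)), integral_const_mul]
    rw [integral_exp_neg_mul_mul_sub_comp_sub hGc hGC hG0 hβ (le_of_lt hθ),
      integral_exp_neg_mul_mul_intervalIntegral hf.integrableOn hβ,
      show -(lam + β) * θ = -lam * θ + -β * θ by ring, exp_add]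
    ring
  calc ∫ a in Ioi 0, exp (-β * a) * discountedIncrement ν lam f a
      = ∫ a in Ioi 0, ∫ θ in Ioi 0,
          exp (-β * a) * (exp (-lam * θ) * ∫ s in (a - θ)..a, f s) ∂ν := by
        simp only [discountedIncrement, integral_const_mul]
    _ = ∫ θ in Ioi 0, (∫ a in Ioi 0,
          exp (-β * a) * (exp (-lam * θ) * ∫ s in (a - θ)..a, f s)) ∂ν :=
        integral_integral_swap
          (integrable_exp_neg_mul_mul_discountedIncrement_integrand hν hlam hf hf0 hβ)
    _ = _ := by
        rw [setIntegral_congr_fun measurableSet_Ioi hinner, integral_mul_const]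

lemma integrable_indicator_Iio_exp_neg_mul_comp_prod
    (hν : ∫⁻ x in Ioi 0, ENNReal.ofReal (min 1 x) ∂ν ≠ ⊤) (hlam : 0 < lam) {w : ℝ → ℝ}
    (hw : Measurable w) {b M : ℝ} (hwM : ∀ x ≤ b, |w x| ≤ M) :
    Integrable
      (Function.uncurry fun y θ => (Iio θ).indicator (fun y => exp (-lam * y) * w (y - θ + b)) y)
      ((volume.restrict (Ioi 0)).prod (ν.restrict (Ioi 0))) := by
  have := sigmaFinite_restrict_Ioi_of_lintegral_min_one_ne_top hν
  set F : ℝ → ℝ → ℝ := fun y θ => (Iio θ).indicator (fun y => exp (-lam * y) * w (y - θ + b)) y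
  have hFm : Measurable (Function.uncurry F) := by
    have : Function.uncurry F = {p : ℝ × ℝ | p.1 < p.2}.indicator
        fun p => exp (-lam * p.1) * w (p.1 - p.2 + b) := by
      ext ⟨y, θ⟩; simp [F, indicator_apply]
    rw [this]
    exact (by fun_prop : Measurable fun p : ℝ × ℝ => exp (-lam * p.1)).mul
      (hw.comp (by fun_prop)) |>.indicator (measurableSet_lt measurable_fst measurable_snd)
  have hFM : ∀ y θ, |F y θ| ≤ M * (Iio θ).indicator (fun y => exp (-lam * y)) y := by
    intro y θ
    by_cases hy : y < θ
    · simp only [F, indicator_of_mem (mem_Iio.2 hy), abs_mul, abs_of_pos (exp_pos _)]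
      rw [mul_comm M]
      exact mul_le_mul_of_nonneg_left (hwM _ (by linarith)) (exp_pos _).le
    · simp [F, indicator_of_notMem (notMem_Iio.2 (not_lt.1 hy))]
  have hbound : ∀ θ, IntegrableOn (fun y => M * (Iio θ).indicator (fun y => exp (-lam * y)) y)
      (Ioi 0) := fun θ =>
    ((exp_neg_integrableOn_Ioi 0 hlam).indicator measurableSet_Iio).const_mul M
  have hslice : ∀ θ, IntegrableOn (F · θ) (Ioi 0) := fun θ =>
    (hbound θ).mono' (hFm.comp measurable_prodMk_right).aestronglyMeasurable
      (Eventually.of_forall fun y => hFM y θ)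
  refine integrable_uncurry_of_integral_abs_le hFm.aestronglyMeasurable
    (Eventually.of_forall hslice)
    ((integrable_one_sub_exp_neg_mul hν hlam.le).const_mul (M / lam)) ?_
  filter_upwards [ae_restrict_mem measurableSet_Ioi] with θ hθ
  calc ∫ y in Ioi 0, |F y θ|
      ≤ ∫ y in Ioi 0, M * (Iio θ).indicator (fun y => exp (-lam * y)) y :=
        integral_mono (hslice θ).abs (hbound θ) fun y => hFM y θ
    _ = M / lam * (1 - exp (-lam * θ)) := by
        rw [integral_const_mul, setIntegral_Ioi_indicator_Iio (le_of_lt hθ),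
          intervalIntegral_exp_neg_mul hlam.ne']
        ring

lemma integral_Ioi_integral_Ioi_eq_exp_mul_discountedIncrement
    (hν : ∫⁻ x in Ioi 0, ENNReal.ofReal (min 1 x) ∂ν ≠ ⊤) (hlam : 0 < lam) {w : ℝ → ℝ}
    (hw : Measurable w) {b M : ℝ} (hwM : ∀ x ≤ b, |w x| ≤ M) :
    ∫ y in Ioi 0, ∫ θ in Ioi y, exp (-lam * y) * w (y - θ + b) ∂ν
      = exp (lam * b) * discountedIncrement ν lam (fun s => exp (-lam * s) * w s) b := by
  set F : ℝ → ℝ → ℝ := fun y θ => (Iio θ).indicator (fun y => exp (-lam * y) * w (y - θ + b)) y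
  have hinner : ∀ y ∈ Ioi (0:ℝ), ∫ θ in Ioi y, exp (-lam * y) * w (y - θ + b) ∂ν
      = ∫ θ in Ioi 0, F y θ ∂ν := by
    intro y hy
    have : (fun θ => F y θ) = (Ioi y).indicator fun θ => exp (-lam * y) * w (y - θ + b) := by
      ext θ; simp [F, indicator_apply]
    rw [this, integral_indicator measurableSet_Ioi, Measure.restrict_restrict measurableSet_Ioi,
      inter_eq_self_of_subset_left (Ioi_subset_Ioi (le_of_lt hy))]
  calc ∫ y in Ioi 0, ∫ θ in Ioi y, exp (-lam * y) * w (y - θ + b) ∂ν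
      = ∫ y in Ioi 0, ∫ θ in Ioi 0, F y θ ∂ν := setIntegral_congr_fun measurableSet_Ioi hinner
    _ = ∫ θ in Ioi 0, (∫ y in Ioi 0, F y θ) ∂ν :=
        have := sigmaFinite_restrict_Ioi_of_lintegral_min_one_ne_top hν
        integral_integral_swap (integrable_indicator_Iio_exp_neg_mul_comp_prod hν hlam hw hwM)
    _ = ∫ θ in Ioi 0, exp (lam * b) *
          (exp (-lam * θ) * ∫ s in (b - θ)..b, exp (-lam * s) * w s) ∂ν :=
        setIntegral_congr_fun measurableSet_Ioi fun θ hθ =>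
          setIntegral_Ioi_indicator_Iio_exp_neg_mul_comp lam b w (le_of_lt hθ)
    _ = _ := integral_const_mul _ _

end DiscountedIncrement

lemma integral_exp_neg_mul_sub_exp_neg_mul {ν : Measure ℝ}
    (hν : ∫⁻ x in Ioi 0, ENNReal.ofReal (min 1 x) ∂ν ≠ ⊤) {c : ℝ} {ψ : ℝ → ℝ}
    (hψ : ∀ θ ≥ (0:ℝ), ψ θ = c * θ - ∫ x in Ioi 0, (1 - exp (-θ * x)) ∂ν) {lam β : ℝ}
    (hlam : 0 ≤ lam) (hβ : 0 ≤ β) :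
    ∫ θ in Ioi 0, (exp (-lam * θ) - exp (-(lam + β) * θ)) ∂ν = c * β - ψ (lam + β) + ψ lam := by
  have h := integral_sub (integrable_one_sub_exp_neg_mul hν (add_nonneg hlam hβ))
    (integrable_one_sub_exp_neg_mul hν hlam)
  rw [hψ lam hlam, hψ (lam + β) (add_nonneg hlam hβ)]
  simp only [sub_sub_sub_cancel_left] at h
  rw [h]
  ring

lemma integral_exp_neg_mul_mul_exp_neg_mul {q Φq : ℝ} {ψ W : ℝ → ℝ}
    (hWLap : ∀ β > Φq, ∫ x in Ioi 0, exp (-β * x) * W x = 1 / (ψ β - q)) {lam β : ℝ}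
    (hlam : Φq < lam) (hβ : 0 ≤ β) :
    ∫ s in Ioi 0, exp (-β * s) * (exp (-lam * s) * W s) = (ψ (lam + β) - q)⁻¹ := by
  rw [inv_eq_one_div, ← hWLap (lam + β) (by linarith)]
  refine setIntegral_congr_fun measurableSet_Ioi fun s _ => ?_
  rw [← mul_assoc, ← exp_add]
  ring_nf

theorem discountedIncrement_scale_eq {c q Φq : ℝ} {ν : Measure ℝ} {ψ W : ℝ → ℝ}
    (hν : ∫⁻ x in Ioi 0, ENNReal.ofReal (min 1 x) ∂ν ≠ ⊤)
    (hψ : ∀ θ ≥ (0:ℝ), ψ θ = c * θ - ∫ x in Ioi 0, (1 - exp (-θ * x)) ∂ν)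
    (hWneg : ∀ x < (0:ℝ), W x = 0) (hWc : ContinuousOn W (Ici 0)) (hΦ0 : 0 ≤ Φq)
    (hΦmax : ∀ θ > Φq, q < ψ θ)
    (hWLap : ∀ β > Φq, ∫ x in Ioi 0, exp (-β * x) * W x = 1 / (ψ β - q)) {lam : ℝ}
    (hlam : Φq < lam) {b : ℝ} (hb : 0 ≤ b) :
    discountedIncrement ν lam (fun s => exp (-lam * s) * W s) b
      = c * (exp (-lam * b) * W b) - 1 + (ψ lam - q) * ∫ s in (0:ℝ)..b, exp (-lam * s) * W s := by
  set f := fun s => exp (-lam * s) * W s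
  have hlam0 : 0 ≤ lam := hΦ0.trans hlam.le
  have hf0 : ∀ x < 0, f x = 0 := fun x hx => by simp [f, hWneg x hx]
  have hfc : ContinuousOn f (Ici 0) :=
    (by fun_prop : Continuous fun s => exp (-lam * s)).continuousOn.mul hWc
  have hψq : ∀ β ≥ 0, ψ (lam + β) - q ≠ 0 := fun β hβ =>
    (sub_pos.2 (hΦmax _ (by linarith))).ne'
  have hfi : Integrable f := integrable_of_integrableOn_Ioi_of_eq_zero
    (Integrable.of_integral_ne_zero (by rw [hWLap lam hlam]; simpa using hψq 0 le_rfl)) hf0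
  have hK := fun β (hβ : 0 < β) =>
    integrableOn_exp_neg_mul_mul_discountedIncrement hν hlam0 hfi hf0 hβ
  have hR := fun β (hβ : 0 < β) =>
    integral_exp_neg_mul_mul_affine_primitive hfi hβ c (ψ lam - q)
  have hGc : Continuous fun a => ∫ s in (0:ℝ)..a, f s :=
    intervalIntegral.continuous_primitive (fun _ _ => hfi.intervalIntegrable) 0
  have hKR := eqOn_zero_of_laplace_eq_zero
    (h := fun a => discountedIncrement ν lam f a
      - (c * f a - 1 + (ψ lam - q) * ∫ s in (0:ℝ)..a, f s)) (β₀ := 0)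
    ((continuous_discountedIncrement hν hlam0 hfi
      (exists_abs_le_of_continuousOn_Ici_of_eq_zero hfc hf0)).continuousOn.sub
      (((continuousOn_const.mul hfc).sub continuousOn_const).add
        (continuousOn_const.mul hGc.continuousOn)))
    (fun β hβ => by
      simp only [mul_sub]
      exact (hK β hβ).sub (hR β hβ).1)
    (fun β hβ => by
      simp only [mul_sub]
      rw [integral_sub (hK β hβ) (hR β hβ).1, (hR β hβ).2,
        integral_exp_neg_mul_mul_discountedIncrement hν hlam0 hfi hf0 hβ,
        integral_exp_neg_mul_sub_exp_neg_mul hν hψ hlam0 hβ.le,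
        integral_exp_neg_mul_mul_exp_neg_mul hWLap hlam hβ.le]
      have := hψq β hβ.le
      field_simp
      ring)
  exact sub_eq_zero.1 (hKR hb)

theorem bv_scale_laplace_identity_general
    (c q Φq : ℝ)
    (ν : MeasureTheory.Measure ℝ) (ψ W : ℝ → ℝ)
    (hνint : ∫⁻ x in Set.Ioi (0:ℝ), ENNReal.ofReal (min 1 x) ∂ν ≠ ⊤)
    (hψ : ∀ θ ≥ (0:ℝ),
      ψ θ = c * θ - ∫ x in Set.Ioi (0:ℝ), (1 - Real.exp (-θ * x)) ∂ν)
    (hWneg : ∀ x < (0:ℝ), W x = 0)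
    (hWc : ContinuousOn W (Set.Ici 0))
    (hΦ0 : 0 ≤ Φq) (hΦmax : ∀ θ > Φq, q < ψ θ)
    (hWLap : ∀ β > Φq,
      ∫ x in Set.Ioi (0:ℝ), Real.exp (-β * x) * W x = 1 / (ψ β - q)) :
    ∀ b ≥ (0:ℝ), ∀ lam > Φq,
      (∫ y in Set.Ioi (0:ℝ),
          ∫ θ in Set.Ioi y, Real.exp (-lam * y) * W (y - θ + b) ∂ν)
        = c * W b - (ψ lam - q) * Real.exp (lam * b)
            * ∫ x in Set.Ioi b, Real.exp (-lam * x) * W x := by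
  intro b hb lam hlam
  have hψq : ψ lam - q ≠ 0 := (sub_pos.2 (hΦmax lam hlam)).ne'
  obtain ⟨M, hM⟩ := exists_abs_le_of_continuousOn_Ici_of_eq_zero hWc hWneg b
  have hf : IntegrableOn (fun x => exp (-lam * x) * W x) (Ioi 0) :=
    Integrable.of_integral_ne_zero (by rw [hWLap lam hlam]; simpa using hψq)
  rw [integral_Ioi_integral_Ioi_eq_exp_mul_discountedIncrement hνint (hΦ0.trans_lt hlam)
      (measurable_of_continuousOn_Ici_of_eq_zero hWc hWneg) hM,
    discountedIncrement_scale_eq hνint hψ hWneg hWc hΦ0 hΦmax hWLap hlam hb,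
    integral_Ioi_eq_sub_intervalIntegral hf hb, hWLap lam hlam,
    show -lam * b = -(lam * b) by ring, exp_neg]
  field_simp
  ring

/-- Laplace transform identity for a bounded variation spectrally negative
Lévy process with drift `c`, Lévy measure `ν` and `q`-scale function `W`:
for `b ≥ 0` and `lam > Φ(q)`,
`∫_0^∞ ∫_{(y,∞)} e^{-lam y} W(y-θ+b) ν(dθ) dy
  = c W(b) - (ψ(lam)-q) e^{lam b} ∫_b^∞ e^{-lam x} W(x) dx`. -/
theorem bv_scale_laplace_identity
    (c q Φq : ℝ) (hc : 0 < c) (hq : 0 ≤ q)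
    (ν : MeasureTheory.Measure ℝ) (ψ W : ℝ → ℝ)
    (hν0 : ν (Set.Iic 0) = 0)
    (hνint : ∫⁻ x in Set.Ioi (0:ℝ), ENNReal.ofReal (min 1 x) ∂ν ≠ ⊤)
    (hψ : ∀ θ ≥ (0:ℝ),
      ψ θ = c * θ - ∫ x in Set.Ioi (0:ℝ), (1 - Real.exp (-θ * x)) ∂ν)
    (hWneg : ∀ x < (0:ℝ), W x = 0)
    (hWc : ContinuousOn W (Set.Ici 0))
    (hΦ0 : 0 ≤ Φq) (hΦroot : ψ Φq = q) (hΦmax : ∀ θ > Φq, q < ψ θ)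
    (hWLap : ∀ β > Φq,
      ∫ x in Set.Ioi (0:ℝ), Real.exp (-β * x) * W x = 1 / (ψ β - q)) :
    ∀ b ≥ (0:ℝ), ∀ lam > Φq,
      (∫ y in Set.Ioi (0:ℝ),
          ∫ θ in Set.Ioi y, Real.exp (-lam * y) * W (y - θ + b) ∂ν)
        = c * W b - (ψ lam - q) * Real.exp (lam * b)
            * ∫ x in Set.Ioi b, Real.exp (-lam * x) * W x :=
  bv_scale_laplace_identity_general c q Φq ν ψ W hνint hψ hWneg hWc hΦ0 hΦmax hWLap
end

section
/- Let $X$ be a Cramér–Lundberg process with premium rate $c > 0$ and hyper-exponential claims: Laplace exponent $\psi(\theta) = c\theta - \lambda + \lambda\sum_{k=1}^n A_k \alpha_k/(\alpha_k + \theta)$ with $\lambda, A_k, \alpha_k > 0$, $\sum_k A_k = 1$. Fix $q > 0$ and suppose $\psi(\theta) - q$ has $n+1$ distinct real roots $\theta_0 = \Phi(q) > 0 > \theta_1 > \cdots > \theta_n$ (none equal to any $-\alpha_k$). Then the $q$-scale function is $W^{(q)}(x) = \sum_{i=0}^n D_i e^{\theta_i x}$ for $x \geq 0$, where $D_i = 1/\psi'(\theta_i)$.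 -/
/-!
Clearing the denominators `αₖ + x`, the function `(ψ(x) - q) ∏ₖ (x + αₖ)` is a polynomial of
degree `n + 1` with leading coefficient `c` that vanishes at the `n + 1` distinct roots `θᵢ`,
hence equals `c ∏ᵢ (x - θᵢ)`. Differentiating `ψ - q = c ∏ᵢ (x - θᵢ) / ∏ₖ (x + αₖ)` at `θᵢ` shows
that `Dᵢ = 1/ψ'(θᵢ)` is the coefficient of `1/(β - θᵢ)` in the Lagrange partial-fraction expansion
of `1/(ψ(β) - q)`, and `1/(β - θᵢ)` is the Laplace transform of `e^{θᵢ x}`.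
-/

open MeasureTheory Set Polynomial Lagrange

theorem integral_exp_neg_mul_mul_sum_exp {ι : Type*} (s : Finset ι) (D θ : ι → ℝ) {β : ℝ}
    (hβ : ∀ i ∈ s, θ i < β) :
    ∫ x in Ioi 0, Real.exp (-β * x) * ∑ i ∈ s, D i * Real.exp (θ i * x)
      = ∑ i ∈ s, D i / (β - θ i) := by
  have hint : ∀ i ∈ s, IntegrableOn (fun x => Real.exp ((θ i - β) * x)) (Ioi 0) := fun i hi =>
    integrableOn_exp_mul_Ioi (sub_neg.mpr (hβ i hi)) 0
  have hexp : ∀ i ∈ s, ∫ x in Ioi 0, Real.exp ((θ i - β) * x) = 1 / (β - θ i) := fun i hi => by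
    rw [integral_exp_mul_Ioi (sub_neg.mpr (hβ i hi)), mul_zero, Real.exp_zero, neg_div,
      ← div_neg, neg_sub]
  calc ∫ x in Ioi 0, Real.exp (-β * x) * ∑ i ∈ s, D i * Real.exp (θ i * x)
      = ∫ x in Ioi 0, ∑ i ∈ s, D i * Real.exp ((θ i - β) * x) := by
        congr 1; ext x
        rw [Finset.mul_sum]
        refine Finset.sum_congr rfl fun i _ => ?_
        rw [mul_left_comm, ← Real.exp_add]
        ring_nf
    _ = ∑ i ∈ s, D i / (β - θ i) := by
        rw [integral_finsetSum _ fun i hi => (hint i hi).const_mul (D i)]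
        refine Finset.sum_congr rfl fun i hi => ?_
        rw [integral_const_mul, hexp i hi, mul_one_div]

theorem hasDerivAt_eval_div_eval_of_isRoot {𝕜 : Type*} [NontriviallyNormedField 𝕜]
    {p r : 𝕜[X]} {x : 𝕜} (hp : p.IsRoot x) (hr : r.eval x ≠ 0) :
    HasDerivAt (fun y => p.eval y / r.eval y) (p.derivative.eval x / r.eval x) x :=
  ((p.hasDerivAt x).div (r.hasDerivAt x) hr).congr_deriv <| by
    rw [hp.eq_zero, zero_mul, sub_zero, sq, mul_div_mul_right _ _ hr]

theorem eval_div_eval_nodal_eq_sum_nodalWeight {F ι : Type*} [Field F] [DecidableEq ι]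
    {s : Finset ι} {v : ι → F} (hvs : Set.InjOn v s) {f : F[X]} (hf : f.degree < s.card)
    {x : F} (hx : ∀ i ∈ s, x ≠ v i) :
    f.eval x / (nodal s v).eval x = ∑ i ∈ s, f.eval (v i) * nodalWeight s v i / (x - v i) := by
  rw [eq_interpolate hvs hf, eval_interpolate_not_at_node _ hx,
    mul_div_cancel_left₀ _ (eval_nodal_not_at_node hx)]
  refine Finset.sum_congr rfl fun i _ => ?_
  rw [← eq_interpolate hvs hf]
  ring

section HyperExponential

variable {ι κ : Type*} [Fintype ι] [DecidableEq ι] [Fintype κ]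

/-- `(ψ - q) · ∏ₖ (X + αₖ)`, written with `nodal Finset.univ (-α) = ∏ₖ (X + αₖ)`. -/
noncomputable def hyperexpNumerator (c lam q : ℝ) (A α : ι → ℝ) : ℝ[X] :=
  (C c * X - C (lam + q)) * nodal Finset.univ (-α)
    + C lam * ∑ k, C (A k * α k) * nodal (Finset.univ.erase k) (-α)

theorem eval_hyperexpNumerator (c lam q : ℝ) (A α : ι → ℝ) {x : ℝ} (hx : ∀ k, x ≠ -α k) :
    (hyperexpNumerator c lam q A α).eval x
      = (c * x - lam + lam * ∑ k, A k * α k / (α k + x) - q)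
        * (nodal Finset.univ (-α)).eval x := by
  have herase : ∀ k, A k * α k / (α k + x) * (nodal Finset.univ (-α)).eval x
      = A k * α k * (nodal (Finset.univ.erase k) (-α)).eval x := fun k => by
    rw [nodal_eq_mul_nodal_erase (Finset.mem_univ k), eval_mul, eval_sub, eval_X, eval_C,
      Pi.neg_apply, ← mul_assoc, div_mul_eq_mul_div, sub_neg_eq_add, add_comm x,
      mul_div_cancel_right₀]
    rw [add_comm, ← sub_neg_eq_add]
    exact sub_ne_zero.mpr (hx k)
  simp only [hyperexpNumerator, eval_add, eval_mul, eval_sub, eval_C, eval_X, eval_finsetSum,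
    add_mul, sub_mul, mul_assoc, Finset.sum_mul, herase]
  ring

theorem degree_hyperexpNumerator_sub_lt (c lam q : ℝ) (A α : ι → ℝ) (θ : κ → ℝ)
    (hcard : Fintype.card κ = Fintype.card ι + 1) :
    (hyperexpNumerator c lam q A α - C c * nodal Finset.univ θ).degree < Fintype.card κ := by
  set Q := nodal Finset.univ (-α)
  set S := ∑ k, C (A k * α k) * nodal (Finset.univ.erase k) (-α)
  -- the two terms of degree `card ι + 1` both have leading coefficient `c`
  have hsplit : hyperexpNumerator c lam q A α - C c * nodal Finset.univ θ
      = c • (X * Q - nodal Finset.univ θ) + (C lam * S - C (lam + q) * Q) := by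
    simp only [hyperexpNumerator, smul_eq_C_mul]
    ring
  have hQ : Q.natDegree = Fintype.card ι := by rw [natDegree_nodal, Finset.card_univ]
  have hXQ : (X * Q).degree = (Fintype.card κ : WithBot ℕ) := by
    rw [degree_mul, degree_X, degree_nodal, Finset.card_univ, hcard]
    push_cast; ring
  have hmonic : (X * Q - nodal Finset.univ θ).degree < (Fintype.card κ : WithBot ℕ) := by
    have := degree_sub_lt_left (q := nodal Finset.univ θ) (hXQ.trans degree_nodal.symm)
      (monic_X.mul nodal_monic).ne_zero
      ((monic_X.mul nodal_monic).leadingCoeff.trans nodal_monic.leadingCoeff.symm)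
    rwa [hXQ] at this
  have hrest : (C lam * S - C (lam + q) * Q).natDegree ≤ Fintype.card ι := by
    refine (natDegree_sub_le_of_le ?_ ((natDegree_C_mul_le _ _).trans hQ.le)).trans
      (max_self _).le
    refine (natDegree_C_mul_le _ _).trans (natDegree_sum_le_of_forall_le _ _ fun k _ => ?_)
    refine (natDegree_C_mul_le _ _).trans ?_
    rw [natDegree_nodal]
    exact Finset.card_le_univ _
  rw [hsplit]
  refine (degree_add_le _ _).trans_lt (max_lt ((degree_smul_le _ _).trans_lt hmonic) ?_)
  refine (degree_le_of_natDegree_le hrest).trans_lt ?_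
  rw [hcard]
  exact_mod_cast Nat.lt_succ_self _

theorem hyperexpNumerator_eq_C_mul_nodal {c lam q : ℝ} {A α : ι → ℝ} {θ : κ → ℝ}
    (hθ : Function.Injective θ) (hcard : Fintype.card κ = Fintype.card ι + 1)
    (hroot : ∀ i, (hyperexpNumerator c lam q A α).IsRoot (θ i)) :
    hyperexpNumerator c lam q A α = C c * nodal Finset.univ θ :=
  eq_of_degree_sub_lt_of_eval_index_eq Finset.univ hθ.injOn
    (by simpa using degree_hyperexpNumerator_sub_lt c lam q A α θ hcard) fun i _ => by
    rw [(hroot i).eq_zero, eval_mul, eval_nodal_at_node (Finset.mem_univ i), mul_zero]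

variable {c lam q : ℝ} {A α : ι → ℝ} {θ : κ → ℝ} {ψ : ℝ → ℝ}

theorem sub_eq_div_nodal_of_hyperexp
    (hψ : ∀ x : ℝ, (∀ k, x ≠ -α k) → ψ x = c * x - lam + lam * ∑ k, A k * α k / (α k + x))
    (hroots : ∀ i, ψ (θ i) = q) (hnotpole : ∀ i k, θ i ≠ -α k) (hθ : Function.Injective θ)
    (hcard : Fintype.card κ = Fintype.card ι + 1) {x : ℝ} (hx : ∀ k, x ≠ -α k) :
    ψ x - q = c * (nodal Finset.univ θ).eval x / (nodal Finset.univ (-α)).eval x := by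
  have hN : hyperexpNumerator c lam q A α = C c * nodal Finset.univ θ :=
    hyperexpNumerator_eq_C_mul_nodal hθ hcard fun i => by
      rw [IsRoot, eval_hyperexpNumerator c lam q A α (hnotpole i), ← hψ _ (hnotpole i), hroots,
        sub_self, zero_mul]
  rw [eq_div_iff (eval_nodal_not_at_node (v := -α) fun k _ => hx k), ← eval_C (a := c) (x := x),
    ← eval_mul, ← hN, eval_hyperexpNumerator c lam q A α hx, hψ x hx]

theorem hasDerivAt_root_of_hyperexp
    (hψ : ∀ x : ℝ, (∀ k, x ≠ -α k) → ψ x = c * x - lam + lam * ∑ k, A k * α k / (α k + x))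
    (hroots : ∀ i, ψ (θ i) = q) (hnotpole : ∀ i k, θ i ≠ -α k) (hθ : Function.Injective θ)
    (hcard : Fintype.card κ = Fintype.card ι + 1) (i : κ) :
    HasDerivAt ψ
      (c * (derivative (nodal Finset.univ θ)).eval (θ i) / (nodal Finset.univ (-α)).eval (θ i))
      (θ i) := by
  have hloc : ψ =ᶠ[nhds (θ i)]
      fun y => q + (C c * nodal Finset.univ θ).eval y / (nodal Finset.univ (-α)).eval y := by
    filter_upwards [Filter.eventually_all.mpr fun k => eventually_ne_nhds (hnotpole i k)]
      with x hx
    rw [eval_mul, eval_C, ← sub_eq_div_nodal_of_hyperexp hψ hroots hnotpole hθ hcard hx,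
      add_sub_cancel]
  have hroot : (C c * nodal Finset.univ θ).IsRoot (θ i) := by
    rw [IsRoot, eval_mul, eval_nodal_at_node (Finset.mem_univ i), mul_zero]
  have hpole : (nodal Finset.univ (-α)).eval (θ i) ≠ 0 :=
    eval_nodal_not_at_node fun k _ => hnotpole i k
  simpa only [derivative_C_mul, eval_mul, eval_C] using
    ((hasDerivAt_eval_div_eval_of_isRoot hroot hpole).const_add q).congr_of_eventuallyEq hloc

end HyperExponential

theorem hyperexponential_scale_function_general
    (n : ℕ) (c lam q : ℝ) (A α : Fin n → ℝ)
    (θ D d : Fin (n + 1) → ℝ) (ψ : ℝ → ℝ)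
    (hα : ∀ k, 0 < α k)
    (hψ : ∀ x : ℝ, (∀ k, x ≠ -α k) →
      ψ x = c * x - lam + lam * ∑ k, A k * α k / (α k + x))
    (hroots : ∀ i, ψ (θ i) = q)
    (hanti : StrictAnti θ)
    (hnotpole : ∀ i k, θ i ≠ -α k)
    (h0 : 0 < θ 0)
    (hd : ∀ i, HasDerivAt ψ (d i) (θ i)) (hD : ∀ i, D i = 1 / d i) :
    ∀ β > θ 0,
      ∫ x in Set.Ioi (0:ℝ),
          Real.exp (-β * x) * (∑ i, D i * Real.exp (θ i * x))
        = 1 / (ψ β - q) := by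
  intro β hβ
  have hθ : Function.Injective θ := hanti.injective
  have hcard : Fintype.card (Fin (n + 1)) = Fintype.card (Fin n) + 1 := by simp
  have hθβ : ∀ i, θ i < β := fun i => (hanti.antitone (Fin.zero_le i)).trans_lt hβ
  have hβpole : ∀ k, β ≠ -α k := fun k =>
    ((neg_neg_of_pos (hα k)).trans (h0.trans hβ)).ne'
  set Q := nodal Finset.univ (-α)
  have hQ : Q.degree < (Finset.univ : Finset (Fin (n + 1))).card := by
    rw [degree_nodal, Finset.card_univ, Fintype.card_fin, Finset.card_univ, Fintype.card_fin]
    exact_mod_cast n.lt_succ_self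
  have hDi : ∀ i, D i = Q.eval (θ i) * nodalWeight Finset.univ θ i / c := fun i => by
    rw [hD i, (hd i).unique (hasDerivAt_root_of_hyperexp hψ hroots hnotpole hθ hcard i),
      ← inv_inv (eval _ (derivative _)),
      ← nodalWeight_eq_eval_derivative_nodal (Finset.mem_univ i), one_div_div, div_eq_mul_inv,
      mul_inv, inv_inv]
    ring
  rw [integral_exp_neg_mul_mul_sum_exp _ D θ fun i _ => hθβ i,
    sub_eq_div_nodal_of_hyperexp hψ hroots hnotpole hθ hcard hβpole, one_div_div, mul_comm c,
    ← div_div, eval_div_eval_nodal_eq_sum_nodalWeight hθ.injOn hQ fun i _ => (hθβ i).ne',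
    Finset.sum_div]
  refine Finset.sum_congr rfl fun i _ => ?_
  rw [hDi]
  ring

/-- Scale function of the Cramér–Lundberg process with hyper-exponential
claims: if `ψ(θ) = cθ - λ + λ ∑_k A_k α_k/(α_k+θ)` and `ψ - q` has `n+1`
distinct real roots `θ_0 = Φ(q) > 0 > θ_1 > ⋯ > θ_n`, then
`W^{(q)}(x) = ∑_i D_i e^{θ_i x}` with `D_i = 1/ψ'(θ_i)`, i.e. this function
has Laplace transform `1/(ψ(β)-q)` for `β > Φ(q)`. -/
theorem hyperexponential_scale_function
    (n : ℕ) (c lam q : ℝ) (A α : Fin n → ℝ)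
    (θ D d : Fin (n + 1) → ℝ) (ψ : ℝ → ℝ)
    (hc : 0 < c) (hlam : 0 < lam) (hq : 0 < q)
    (hA : ∀ k, 0 < A k) (hα : ∀ k, 0 < α k) (hsum : ∑ k, A k = 1)
    (hψ : ∀ x : ℝ, (∀ k, x ≠ -α k) →
      ψ x = c * x - lam + lam * ∑ k, A k * α k / (α k + x))
    (hroots : ∀ i, ψ (θ i) = q)
    (hanti : StrictAnti θ)
    (hnotpole : ∀ i k, θ i ≠ -α k)
    (h0 : 0 < θ 0) (hneg : ∀ i : Fin (n + 1), i ≠ 0 → θ i < 0)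
    (hΦmax : ∀ β > θ 0, q < ψ β)
    (hd : ∀ i, HasDerivAt ψ (d i) (θ i)) (hD : ∀ i, D i = 1 / d i) :
    ∀ β > θ 0,
      ∫ x in Set.Ioi (0:ℝ),
          Real.exp (-β * x) * (∑ i, D i * Real.exp (θ i * x))
        = 1 / (ψ β - q) :=
  hyperexponential_scale_function_general n c lam q A α θ D d ψ hα hψ hroots hanti hnotpole h0 hd hD
end

section
/- For the hyper-exponential Cramér–Lundberg model with scale functions $W^{(q)}(x) = \sum_{i=0}^n D_i e^{\theta_i x}$ and $\mathbb{W}^{(q)}(x) = \sum_{j=0}^n \tilde{D}_j e^{\tilde\theta_j x}$ ($D_i = 1/\psi'(\theta_i)$, $\tilde D_j = 1/(\psi'(\tilde\theta_j)-\delta)$ where $\theta_i$, $\tilde\theta_j$ are the roots of $\psi - q$ and $\psi - \delta\cdot - q$), one has for $x \geq b \geq 0$: $\int_b^x \mathbb{W}^{(q)}(x-z)W^{(q)\prime}(z)\,dz = -\frac{1}{\delta}W^{(q)}(x) - \sum_{j=0}^n\sum_{i=0}^n \frac{\tilde D_j}{\theta_i - \tilde\theta_j}D_i\theta_i e^{\theta_i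 b}e^{\tilde\theta_j(x-b)}$. -/
/-!
Multiplying out, the integrand is a double sum of terms `e^{θ̃_j (x - z)} e^{θ_i z}`, each of
which integrates in closed form since `θ_i ≠ θ̃_j`. The terms in `e^{θ_i x}` then collect into
`D_i θ_i e^{θ_i x} ∑_j D̃_j / (θ_i - θ̃_j)`, and this inner sum is the partial fraction
expansion of `1 / (ψ(t) - δ t - q)` at `t = θ_i`, i.e. `-1 / (δ θ_i)`. The expansion holds
because `(ψ(t) - δ t - q) ∏_k (t + α_k)` is a polynomial of degree `n + 1` vanishing at the
`n + 1` roots `θ̃_j`, hence a multiple of `∏_j (t - θ̃_j)`, and Lagrange interpolation of the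
degree-`n` polynomial `∏_k (t + α_k)` at those roots gives the expansion.
-/

open Polynomial Finset Lagrange Topology

namespace Lagrange

section Field

variable {F : Type*} [Field F] {ι : Type*} {s : Finset ι} {v : ι → F}

theorem degree_nodal_sub_X_pow_lt : (nodal s v - X ^ s.card).degree < (s.card : WithBot ℕ) := by
  rcases s.eq_empty_or_nonempty with rfl | hs
  · simp
  have := (IsMonicOfDegree.mk (natDegree_nodal (s := s) (v := v)) nodal_monic).natDegree_sub_X_pow
    hs.card_pos.ne'
  exact degree_le_natDegree.trans_lt (by exact_mod_cast this)

theorem eq_C_mul_nodal_of_eval_eq_zero (hvs : Set.InjOn v s) {p : F[X]} {a : F}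
    (hp : (p - C a * X ^ s.card).degree < (s.card : WithBot ℕ))
    (hroots : ∀ i ∈ s, p.eval (v i) = 0) :
    p = C a * nodal s v := by
  refine eq_of_degree_sub_lt_of_eval_index_eq s hvs ?_ fun i hi => by
    rw [hroots i hi, eval_mul, eval_nodal_at_node hi, mul_zero]
  have hnodal := degree_nodal_sub_X_pow_lt (s := s) (v := v)
  rw [← mem_degreeLT] at hp hnodal ⊢
  convert Submodule.sub_mem _ hp (Submodule.smul_mem _ a hnodal) using 1
  rw [smul_eq_C_mul]; ring

end Field

section Analysis

variable {𝕜 : Type*} [NontriviallyNormedField 𝕜] {ι : Type*}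
  {s : Finset ι} {v : ι → 𝕜} {g : 𝕜 → 𝕜} {p : 𝕜[X]} {a : 𝕜}

theorem mul_eval_node_eq_of_hasDerivAt
    (hg : ∀ t, p.eval t ≠ 0 → g t * p.eval t = a * (nodal s v).eval t)
    {i : ι} (hi : i ∈ s) (hpi : p.eval (v i) ≠ 0) {g' : 𝕜} (hg' : HasDerivAt g g' (v i)) :
    g' * p.eval (v i) = a * (nodal s v).derivative.eval (v i) := by
  have hgi : g (v i) = 0 := by
    simpa [eval_nodal_at_node hi, hpi] using hg (v i) hpi
  have hnear : (fun t => a * (nodal s v).eval t) =ᶠ[𝓝 (v i)] fun t => g t * p.eval t :=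
    (p.continuous.continuousAt.eventually_ne hpi).mono fun t ht => (hg t ht).symm
  have := (hg'.mul (p.hasDerivAt (v i))).unique
    ((((nodal s v).hasDerivAt (v i)).const_mul a).congr_of_eventuallyEq hnear.symm)
  rwa [hgi, zero_mul, add_zero] at this

theorem sum_inv_deriv_mul_inv_sub_eq_inv [DecidableEq ι] (hvs : Set.InjOn v s)
    (hp : p.degree < (s.card : WithBot ℕ))
    (hg : ∀ t, p.eval t ≠ 0 → g t * p.eval t = a * (nodal s v).eval t)
    {g' : ι → 𝕜} (hg' : ∀ i ∈ s, HasDerivAt g (g' i) (v i))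
    (hpv : ∀ i ∈ s, p.eval (v i) ≠ 0) {t : 𝕜} (ht : p.eval t ≠ 0) (htv : ∀ i ∈ s, t ≠ v i) :
    ∑ i ∈ s, (g' i)⁻¹ * (t - v i)⁻¹ = (g t)⁻¹ := by
  have hweight : ∀ i ∈ s, (g' i)⁻¹ = a⁻¹ * (nodalWeight s v i * p.eval (v i)) := by
    intro i hi
    rw [nodalWeight_eq_eval_derivative_nodal hi, eq_div_iff (hpv i hi) |>.2
      (mul_eval_node_eq_of_hasDerivAt hg hi (hpv i hi) (hg' i hi)), inv_div,
      div_eq_mul_inv, mul_inv]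
    ring
  have hgt : g t = a * (nodal s v).eval t / p.eval t := by
    rw [eq_div_iff ht, hg t ht]
  calc ∑ i ∈ s, (g' i)⁻¹ * (t - v i)⁻¹
      = a⁻¹ * ∑ i ∈ s, nodalWeight s v i * (t - v i)⁻¹ * p.eval (v i) := by
        rw [mul_sum]
        exact sum_congr rfl fun i hi => by rw [hweight i hi]; ring
    _ = a⁻¹ * (p.eval t / (nodal s v).eval t) := by
        conv_rhs => rw [eq_interpolate hvs hp]
        rw [eval_interpolate_not_at_node _ htv,
          mul_div_cancel_left₀ _ (eval_nodal_not_at_node htv)]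
    _ = (g t)⁻¹ := by rw [hgt, inv_div]; ring

end Analysis

end Lagrange

section CramerLundberg

variable {ι : Type*} [Fintype ι] [DecidableEq ι]

/-- The numerator of `c x - lam + lam ∑ₖ Aₖ αₖ / (αₖ + x) - q` over the common denominator
`∏ₖ (x + αₖ) = (nodal univ (-α)).eval x`. -/
noncomputable def cramerLundbergNumerator {F : Type*} [Field F] (c lam q : F) (A α : ι → F) :
    F[X] :=
  (C c * X - C (lam + q)) * nodal univ (-α) +
    ∑ k, C (lam * A k * α k) * nodal (univ.erase k) (-α)

variable {F : Type*} [Field F]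

theorem eval_cramerLundbergNumerator (c lam q : F) (A α : ι → F) {x : F}
    (hx : ∀ k, x ≠ -α k) :
    (cramerLundbergNumerator c lam q A α).eval x
      = (c * x - lam + lam * ∑ k, A k * α k / (α k + x) - q) * (nodal univ (-α)).eval x := by
  have hterm : ∀ k, A k * α k / (α k + x) * (nodal univ (-α)).eval x
      = A k * α k * (nodal (univ.erase k) (-α)).eval x := by
    intro k
    have hk : α k + x ≠ 0 := fun h => hx k (by linear_combination h)
    rw [nodal_eq_mul_nodal_erase (mem_univ k), eval_mul]
    simp only [eval_sub, eval_X, eval_C, Pi.neg_apply]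
    field_simp
    ring
  simp only [cramerLundbergNumerator, eval_add, eval_mul, eval_sub, eval_C, eval_X,
    eval_finsetSum]
  rw [add_sub_right_comm, add_mul, mul_assoc lam, sum_mul, sum_congr rfl fun k _ => hterm k,
    mul_sum, sub_mul]
  simp only [mul_assoc]
  ring

theorem degree_cramerLundbergNumerator_sub_lt (c lam q : F) (A α : ι → F) :
    (cramerLundbergNumerator c lam q A α - C c * X ^ (Fintype.card ι + 1)).degree
      < ((Fintype.card ι + 1 : ℕ) : WithBot ℕ) := by
  set m := Fintype.card ι
  have hP : IsMonicOfDegree (nodal univ (-α)) m := ⟨natDegree_nodal, nodal_monic⟩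
  have hXP := ((isMonicOfDegree_X F).mul hP).natDegree_sub_X_pow (by omega)
  have hS : (∑ k, C (lam * A k * α k) * nodal (univ.erase k) (-α)).natDegree ≤ m := by
    refine natDegree_sum_le_of_forall_le _ _ fun k _ => (natDegree_C_mul_le _ _).trans ?_
    rw [natDegree_nodal]
    exact card_le_univ _
  have hrest : (∑ k, C (lam * A k * α k) * nodal (univ.erase k) (-α)
      - C (lam + q) * nodal univ (-α)).natDegree ≤ m :=
    (natDegree_sub_le _ _).trans (max_le hS ((natDegree_C_mul_le _ _).trans hP.natDegree_eq.le))
  have hsplit : cramerLundbergNumerator c lam q A α - C c * X ^ (m + 1)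
      = C c * (X * nodal univ (-α) - X ^ (1 + m)) + (∑ k, C (lam * A k * α k) *
        nodal (univ.erase k) (-α) - C (lam + q) * nodal univ (-α)) := by
    rw [cramerLundbergNumerator, add_comm 1 m]; ring
  refine degree_le_natDegree.trans_lt ?_
  rw [hsplit]
  exact_mod_cast (natDegree_add_le _ _).trans_lt <| max_lt
    ((natDegree_C_mul_le c _).trans_lt (hXP.trans_eq (add_comm 1 m))) (Nat.lt_succ_of_le hrest)

theorem sum_inv_deriv_mul_inv_sub_eq_inv_of_hyperexponential {𝕜 : Type*}
    [NontriviallyNormedField 𝕜] {κ : Type*} [Fintype κ] [DecidableEq κ] {c lam q : 𝕜}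
    {A α : ι → 𝕜} {φ : 𝕜 → 𝕜}
    (hφ : ∀ x, (∀ k, x ≠ -α k) → φ x = c * x - lam + lam * ∑ k, A k * α k / (α k + x))
    (hcard : Fintype.card κ = Fintype.card ι + 1) {v : κ → 𝕜} (hv : Function.Injective v)
    (hroots : ∀ j, φ (v j) = q) (hpole : ∀ j k, v j ≠ -α k)
    {φ' : κ → 𝕜} (hφ' : ∀ j, HasDerivAt φ (φ' j) (v j))
    {t : 𝕜} (ht : ∀ k, t ≠ -α k) (htv : ∀ j, t ≠ v j) :
    ∑ j, (φ' j)⁻¹ * (t - v j)⁻¹ = (φ t - q)⁻¹ := by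
  have hpoles : ∀ x, (nodal univ (-α)).eval x ≠ 0 ↔ ∀ k, x ≠ -α k := by
    intro x
    simp [eval_nodal, prod_ne_zero_iff, add_eq_zero_iff_eq_neg]
  have hnum : ∀ x, (∀ k, x ≠ -α k) → (cramerLundbergNumerator c lam q A α).eval x
      = (φ x - q) * (nodal univ (-α)).eval x := by
    intro x hx
    rw [eval_cramerLundbergNumerator c lam q A α hx, hφ x hx]
  have hfactor : cramerLundbergNumerator c lam q A α = C c * nodal univ v := by
    refine eq_C_mul_nodal_of_eval_eq_zero hv.injOn ?_ fun j _ => ?_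
    · rw [card_univ, hcard]; exact degree_cramerLundbergNumerator_sub_lt c lam q A α
    · rw [hnum _ (hpole j), hroots j, sub_self, zero_mul]
  refine sum_inv_deriv_mul_inv_sub_eq_inv (p := nodal univ (-α)) (a := c) hv.injOn ?_ ?_
    (fun j _ => (hφ' j).sub_const q) (fun j _ => (hpoles _).2 (hpole j)) ((hpoles t).2 ht)
    fun j _ => htv j
  · rw [degree_nodal, card_univ, card_univ, hcard]; exact_mod_cast Nat.lt_succ_self _
  · intro x hx
    rw [← hnum x ((hpoles x).1 hx), hfactor, eval_mul, eval_C]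

end CramerLundberg

section ExponentialConvolution

open Real

theorem integral_exp_mul_sub_mul_exp_mul {μ ν : ℝ} (h : ν ≠ μ) (b x : ℝ) :
    ∫ z in b..x, exp (μ * (x - z)) * exp (ν * z)
      = (exp (ν * x) - exp (ν * b) * exp (μ * (x - b))) / (ν - μ) := by
  have hderiv : ∀ z, HasDerivAt (fun z => exp (μ * (x - z)) * exp (ν * z) / (ν - μ))
      (exp (μ * (x - z)) * exp (ν * z)) z := by
    intro z
    refine ((((hasDerivAt_id z).const_sub x).const_mul μ).exp.mul
      ((hasDerivAt_id z).const_mul ν).exp).div_const (ν - μ) |>.congr_deriv ?_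
    rw [div_eq_iff (sub_ne_zero.2 h), id]
    ring
  rw [intervalIntegral.integral_eq_sub_of_hasDerivAt (fun z _ => hderiv z)
    ((by fun_prop : Continuous fun z => exp (μ * (x - z)) * exp (ν * z)).intervalIntegrable b x)]
  simp only [sub_self, mul_zero, exp_zero, one_mul]
  ring

theorem integral_sum_exp_mul_sum_exp {ι κ : Type*} (s : Finset ι) (t : Finset κ)
    (β μ : ι → ℝ) (γ ν : κ → ℝ) (h : ∀ j ∈ s, ∀ i ∈ t, ν i ≠ μ j) (b x : ℝ) :
    ∫ z in b..x, (∑ j ∈ s, β j * exp (μ j * (x - z))) * (∑ i ∈ t, γ i * exp (ν i * z))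
      = ∑ j ∈ s, ∑ i ∈ t, β j * γ i / (ν i - μ j)
          * (exp (ν i * x) - exp (ν i * b) * exp (μ j * (x - b))) := by
  have hcont : ∀ j i, Continuous fun z => β j * γ i * (exp (μ j * (x - z)) * exp (ν i * z)) :=
    fun j i => by fun_prop
  simp_rw [sum_mul_sum, mul_mul_mul_comm _ (exp _)]
  rw [intervalIntegral.integral_finsetSum fun j _ =>
    (continuous_finsetSum t fun i _ => hcont j i).intervalIntegrable b x]
  refine sum_congr rfl fun j hj => ?_
  rw [intervalIntegral.integral_finsetSum fun i _ => (hcont j i).intervalIntegrable b x]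
  refine sum_congr rfl fun i hi => ?_
  rw [intervalIntegral.integral_const_mul, integral_exp_mul_sub_mul_exp_mul (h j hj i hi)]
  ring

end ExponentialConvolution

theorem hyperexponential_dividend_convolution_general
    (n : ℕ) (c lam q δ : ℝ) (A α : Fin n → ℝ)
    (θ θt D Dt dt : Fin (n + 1) → ℝ) (ψ : ℝ → ℝ)
    (hq : 0 < q) (hδ : 0 < δ)
    (hα : ∀ k, 0 < α k) (hsum : ∑ k, A k = 1)
    (hψ : ∀ x : ℝ, (∀ k, x ≠ -α k) →
      ψ x = c * x - lam + lam * ∑ k, A k * α k / (α k + x))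
    (hroots : ∀ i, ψ (θ i) = q)
    (hroots' : ∀ j, ψ (θt j) - δ * θt j = q)
    (hanti' : StrictAnti θt)
    (hdist : ∀ i j, θ i ≠ θt j)
    (hpole : ∀ i k, θ i ≠ -α k) (hpole' : ∀ j k, θt j ≠ -α k)
    (hdt : ∀ j, HasDerivAt ψ (dt j) (θt j)) (hDt : ∀ j, Dt j = 1 / (dt j - δ)) :
    ∀ b x : ℝ, 0 ≤ b → b ≤ x →
      ∫ z in b..x,
          (∑ j, Dt j * Real.exp (θt j * (x - z)))
            * (∑ i, D i * θ i * Real.exp (θ i * z))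
        = -(1 / δ) * (∑ i, D i * Real.exp (θ i * x))
          - ∑ j, ∑ i, Dt j / (θ i - θt j) * D i * θ i
              * Real.exp (θ i * b) * Real.exp (θt j * (x - b)) := by
  intro b x _ _
  have hψ0 : ψ 0 = 0 := by
    rw [hψ 0 fun k h => (hα k).ne' (by linarith)]
    simp [mul_div_assoc, div_self (hα _).ne', hsum]
  have hθ : ∀ i, θ i ≠ 0 := fun i h => hq.ne' (by rw [← hroots i, h, hψ0])
  have key : ∀ i, ∑ j, Dt j / (θ i - θt j) = -(δ * θ i)⁻¹ := by
    intro i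
    have := sum_inv_deriv_mul_inv_sub_eq_inv_of_hyperexponential (c := c - δ) (lam := lam)
      (q := q) (A := A) (φ := fun t => ψ t - δ * t) (fun x hx => by rw [hψ x hx]; ring)
      (by simp) hanti'.injective hroots' hpole'
      (fun j => (hdt j).sub ((hasDerivAt_id _).const_mul δ)) (hpole i) (hdist i)
    simp only [mul_one] at this
    simp_rw [hDt, one_div, div_eq_mul_inv]
    rw [this, hroots i, sub_sub_cancel_left, inv_neg]
  rw [integral_sum_exp_mul_sum_exp univ univ Dt θt (fun i => D i * θ i) θ
    (fun j _ i _ => hdist i j)]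
  simp_rw [mul_sub, sum_sub_distrib]
  congr 1
  · rw [sum_comm, mul_sum]
    refine sum_congr rfl fun i _ => ?_
    calc ∑ j, Dt j * (D i * θ i) / (θ i - θt j) * Real.exp (θ i * x)
        = (∑ j, Dt j / (θ i - θt j)) * (θ i * (D i * Real.exp (θ i * x))) := by
          rw [sum_mul]; exact sum_congr rfl fun j _ => by ring
      _ = -(1 / δ) * (D i * Real.exp (θ i * x)) := by
          rw [key i]; field_simp [hθ i]
  · exact sum_congr rfl fun j _ => sum_congr rfl fun i _ => by ring

/-- Convolution computation for the hyper-exponential Cramér–Lundberg model: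
with `W^{(q)}(x) = ∑_i D_i e^{θ_i x}`, `W^{(q)'}(z) = ∑_i D_i θ_i e^{θ_i z}`,
and `𝕎^{(q)}(x) = ∑_j D̃_j e^{θ̃_j x}`, for `x ≥ b ≥ 0`:
`∫_b^x 𝕎^{(q)}(x-z) W^{(q)'}(z) dz
  = -(1/δ) W^{(q)}(x) - ∑_j ∑_i (D̃_j/(θ_i - θ̃_j)) D_i θ_i e^{θ_i b} e^{θ̃_j (x-b)}`. -/
theorem hyperexponential_dividend_convolution
    (n : ℕ) (c lam q δ : ℝ) (A α : Fin n → ℝ)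
    (θ θt D Dt d dt : Fin (n + 1) → ℝ) (ψ : ℝ → ℝ)
    (hc : 0 < c) (hlam : 0 < lam) (hq : 0 < q) (hδ : 0 < δ) (hδc : δ < c)
    (hA : ∀ k, 0 < A k) (hα : ∀ k, 0 < α k) (hsum : ∑ k, A k = 1)
    (hψ : ∀ x : ℝ, (∀ k, x ≠ -α k) →
      ψ x = c * x - lam + lam * ∑ k, A k * α k / (α k + x))
    (hroots : ∀ i, ψ (θ i) = q)
    (hroots' : ∀ j, ψ (θt j) - δ * θt j = q)
    (hanti : StrictAnti θ) (hanti' : StrictAnti θt)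
    (hdist : ∀ i j, θ i ≠ θt j)
    (hpole : ∀ i k, θ i ≠ -α k) (hpole' : ∀ j k, θt j ≠ -α k)
    (hd : ∀ i, HasDerivAt ψ (d i) (θ i)) (hD : ∀ i, D i = 1 / d i)
    (hdt : ∀ j, HasDerivAt ψ (dt j) (θt j)) (hDt : ∀ j, Dt j = 1 / (dt j - δ)) :
    ∀ b x : ℝ, 0 ≤ b → b ≤ x →
      ∫ z in b..x,
          (∑ j, Dt j * Real.exp (θt j * (x - z)))
            * (∑ i, D i * θ i * Real.exp (θ i * z))
        = -(1 / δ) * (∑ i, D i * Real.exp (θ i * x))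
          - ∑ j, ∑ i, Dt j / (θ i - θt j) * D i * θ i
              * Real.exp (θ i * b) * Real.exp (θt j * (x - b)) :=
  hyperexponential_dividend_convolution_general n c lam q δ A α θ θt D Dt dt ψ hq hδ hα hsum hψ
    hroots hroots' hanti' hdist hpole hpole' hdt hDt
end
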